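/- arXiv:math/0312294 — 9 statements merged into one kernel-verified Lean document; each statement's English description precedes it below -/
import Mathlib

section
/- If μ_t(x) > 0, then the total jump rate is finite: γ_x(t) = ∑_{y∈E} σ_t(y|x) ≤ (∑_{y∈E} |⟪Ψ_t, P(y) H P(x) Ψ_t⟫|) / μ_t(x) < ∞. -/
open scoped ComplexInnerProductSpace in
/-- Cauchy–Schwarz for the positive sesquilinear form of a positive self-adjoint operator. -/
lemma pos_op_cauchy_schwarz {𝓗 : Type*} [NormedAddCommGroup 𝓗] [InnerProductSpace ℂ 𝓗]
    [CompleteSpace 𝓗] (T : 𝓗 →L[ℂ] 𝓗) (hsa : IsSelfAdjoint T)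
    (hpos : ∀ Φ : 𝓗, 0 ≤ (inner ℂ Φ (T Φ) : ℂ).re) (u v : 𝓗) :
    ‖(inner ℂ u (T v) : ℂ)‖ ^ 2 ≤ (inner ℂ u (T u) : ℂ).re * (inner ℂ v (T v) : ℂ).re := by
  have hsym := (ContinuousLinearMap.isSelfAdjoint_iff_isSymmetric.mp hsa)
  let c : PreInnerProductSpace.Core ℂ 𝓗 :=
  { inner := fun a b => inner ℂ a (T b)
    conj_inner_symm := fun a b => by
      rw [inner_conj_symm]
      exact hsym a b
    re_inner_nonneg := hpos
    add_left := fun a b z => by simp [inner_add_left]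
    smul_left := fun a b r => by simp [inner_smul_left, mul_comm] }
  have key := @InnerProductSpace.Core.inner_mul_inner_self_le ℂ 𝓗 _ _ _ c u v
  have h1 : (@inner ℂ 𝓗 (InnerProductSpace.Core.toPreInner' (c := c)) u v) = inner ℂ u (T v) := rfl
  have h2 : (@inner ℂ 𝓗 (InnerProductSpace.Core.toPreInner' (c := c)) v u) = inner ℂ v (T u) := rfl
  have h3 : (@inner ℂ 𝓗 (InnerProductSpace.Core.toPreInner' (c := c)) u u) = inner ℂ u (T u) := rfl
  have h4 : (@inner ℂ 𝓗 (InnerProductSpace.Core.toPreInner' (c := c)) v v) = inner ℂ v (T v) := rfl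
  rw [h1, h2, h3, h4] at key
  have hnorm : ‖(inner ℂ v (T u) : ℂ)‖ = ‖(inner ℂ u (T v) : ℂ)‖ := by
    rw [← RCLike.norm_conj (inner ℂ v (T u) : ℂ), inner_conj_symm]
    exact congrArg norm (hsym u v)
  rw [hnorm, ← pow_two] at key
  exact key

/-- If `μ_t(x) > 0`, then the total jump rate is finite:
`γ_x(t) = ∑_{y∈E} σ_t(y|x) ≤ (∑_{y∈E} |⟪Ψ_t, P(y) H P(x) Ψ_t⟫|) / μ_t(x) < ∞`. -/
theorem bell_total_rate_finite
    {𝓗 : Type*} [NormedAddCommGroup 𝓗] [InnerProductSpace ℂ 𝓗] [CompleteSpace 𝓗]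
    {E : Type*} [Countable E]
    (P : E → 𝓗 →L[ℂ] 𝓗)
    (hP_sa : ∀ x, IsSelfAdjoint (P x))
    (hP_pos : ∀ x (Φ : 𝓗), 0 ≤ (inner ℂ Φ (P x Φ) : ℂ).re)
    (hP_sum : ∀ Φ : 𝓗, HasSum (fun x => P x Φ) Φ)
    (H : 𝓗 →L[ℂ] 𝓗) (hH : IsSelfAdjoint H)
    (Ψ₀ : 𝓗) (Ψ : ℝ → 𝓗)
    (hΨ : ∀ t : ℝ, Ψ t = NormedSpace.exp ((-(Complex.I * (t : ℂ)) / 2) • H) Ψ₀)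
    (μ : ℝ → E → ℝ)
    (hμ : ∀ t x, μ t x = (inner ℂ (Ψ t) (P x (Ψ t)) : ℂ).re)
    (σ : ℝ → E → E → ℝ)
    (hσ : ∀ t (x y : E), 0 < μ t x →
      σ t y x = max ((inner ℂ (Ψ t) (P y (H (P x (Ψ t)))) : ℂ).im) 0 / μ t x)
    (t : ℝ) (x : E) (hpos : 0 < μ t x) :
    Summable (fun y => ‖(inner ℂ (Ψ t) (P y (H (P x (Ψ t)))) : ℂ)‖) ∧
    Summable (fun y => σ t y x) ∧
    ∑' y, σ t y x ≤ (∑' y, ‖(inner ℂ (Ψ t) (P y (H (P x (Ψ t)))) : ℂ)‖) / μ t x := by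
  set Φ := Ψ t with hΦ
  set ξ := H (P x Φ) with hξ
  -- summability of the diagonal terms
  have hdiag : ∀ u : 𝓗, Summable (fun y => (inner ℂ u (P y u) : ℂ).re) := by
    intro u
    have h1 : HasSum (fun y => (innerSL ℂ u) (P y u)) ((innerSL ℂ u) u) :=
      (innerSL ℂ u).hasSum (hP_sum u)
    have h2 : HasSum (fun y => (inner ℂ u (P y u) : ℂ)) (inner ℂ u u) := h1
    exact (Complex.hasSum_re h2).summable
  have hf := hdiag Φ
  have hg := hdiag ξ
  -- Cauchy–Schwarz bound
  have hCS : ∀ y, ‖(inner ℂ Φ (P y ξ) : ℂ)‖ ≤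
      ((inner ℂ Φ (P y Φ) : ℂ).re + (inner ℂ ξ (P y ξ) : ℂ).re) / 2 := by
    intro y
    have h := pos_op_cauchy_schwarz (P y) (hP_sa y) (hP_pos y) Φ ξ
    have hfy := hP_pos y Φ
    have hgy := hP_pos y ξ
    nlinarith [norm_nonneg (inner ℂ Φ (P y ξ) : ℂ),
      sq_nonneg ((inner ℂ Φ (P y Φ) : ℂ).re - (inner ℂ ξ (P y ξ) : ℂ).re),
      sq_nonneg (‖(inner ℂ Φ (P y ξ) : ℂ)‖ -
        ((inner ℂ Φ (P y Φ) : ℂ).re + (inner ℂ ξ (P y ξ) : ℂ).re) / 2)]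
  have hsum1 : Summable (fun y => ‖(inner ℂ Φ (P y ξ) : ℂ)‖) :=
    Summable.of_nonneg_of_le (fun y => norm_nonneg _) hCS ((hf.add hg).div_const 2)
  refine ⟨hsum1, ?_, ?_⟩ <;>
  · have hσb : ∀ y, σ t y x ≤ ‖(inner ℂ Φ (P y ξ) : ℂ)‖ / μ t x := by
      intro y
      rw [hσ t x y hpos]
      have him : max ((inner ℂ Φ (P y ξ) : ℂ)).im 0 ≤ ‖(inner ℂ Φ (P y ξ) : ℂ)‖ :=
        max_le ((le_abs_self _).trans (Complex.abs_im_le_norm _)) (norm_nonneg _)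
      exact div_le_div_of_nonneg_right him hpos.le
    have hσnn : ∀ y, 0 ≤ σ t y x := by
      intro y
      rw [hσ t x y hpos]
      positivity
    have hσsum : Summable (fun y => σ t y x) :=
      Summable.of_nonneg_of_le hσnn hσb (hsum1.div_const (μ t x))
    first
    | exact hσsum
    | calc ∑' y, σ t y x ≤ ∑' y, ‖(inner ℂ Φ (P y ξ) : ℂ)‖ / μ t x :=
            Summable.tsum_le_tsum hσb hσsum (hsum1.div_const (μ t x))
        _ = (∑' y, ‖(inner ℂ Φ (P y ξ) : ℂ)‖) / μ t x := tsum_div_const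
end

section
/- If μ_s(x) > 0, then γ_x(s) · μ_s(x) ≥ − Im ⟪Ψ_s, P(x) H Ψ_s⟫; equivalently, the total jump rate dominates the negative logarithmic derivative of μ_s(x): γ_x(s) ≥ −(d/ds) log μ_s(x). -/
open scoped ENNReal

/-- If `μ_s(x) > 0`, then `γ_x(s) · μ_s(x) ≥ − Im ⟪Ψ_s, P(x) H Ψ_s⟫`,
i.e. the total jump rate (as a sum in `[0,∞]` of Bell's rates
`σ_s(y|x) = [Im ⟪Ψ_s, P(y) H P(x) Ψ_s⟫]⁺ / μ_s(x)`) dominates the negative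
logarithmic derivative of `μ_s(x)`. -/
theorem bell_rate_dominates_log_deriv
    {𝓗 : Type*} [NormedAddCommGroup 𝓗] [InnerProductSpace ℂ 𝓗] [CompleteSpace 𝓗]
    {E : Type*} [Countable E]
    (P : E → 𝓗 →L[ℂ] 𝓗)
    (hP_sa : ∀ x, IsSelfAdjoint (P x))
    (hP_pos : ∀ x (Φ : 𝓗), 0 ≤ (inner ℂ Φ (P x Φ) : ℂ).re)
    (hP_sum : ∀ Φ : 𝓗, HasSum (fun x => P x Φ) Φ)
    (H : 𝓗 →L[ℂ] 𝓗) (hH : IsSelfAdjoint H)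
    (Ψ₀ : 𝓗) (Ψ : ℝ → 𝓗)
    (hΨ : ∀ t : ℝ, Ψ t = NormedSpace.exp ((-(Complex.I * (t : ℂ)) / 2) • H) Ψ₀)
    (μ : ℝ → E → ℝ)
    (hμ : ∀ t x, μ t x = (inner ℂ (Ψ t) (P x (Ψ t)) : ℂ).re)
    (s : ℝ) (x : E) (hpos : 0 < μ s x) :
    ENNReal.ofReal (-((inner ℂ (Ψ s) (P x (H (Ψ s))) : ℂ).im)) ≤
      (∑' y, ENNReal.ofReal
          (max ((inner ℂ (Ψ s) (P y (H (P x (Ψ s)))) : ℂ).im) 0 / μ s x)) *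
        ENNReal.ofReal (μ s x) := by
  set ψ := Ψ s
  set Φ := H (P x ψ) with hΦ
  set f : E → ℝ := fun y => (inner ℂ ψ (P y Φ) : ℂ).im with hf
  -- the sum of f equals Im ⟪ψ, H (P x ψ)⟫ = -Im ⟪ψ, P x (H ψ)⟫
  have hsymH := (ContinuousLinearMap.isSelfAdjoint_iff_isSymmetric.mp hH)
  have hsymP := (ContinuousLinearMap.isSelfAdjoint_iff_isSymmetric.mp (hP_sa x))
  have hval : (inner ℂ ψ Φ : ℂ).im = -((inner ℂ ψ (P x (H ψ)) : ℂ).im) := by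
    have h1 : (inner ℂ ψ Φ : ℂ) = inner ℂ (H ψ) (P x ψ) := by
      exact (hsymH ψ (P x ψ)).symm
    have h2 : (inner ℂ (P x ψ) (H ψ) : ℂ) = inner ℂ ψ (P x (H ψ)) := hsymP ψ (H ψ)
    have h3 : (inner ℂ (H ψ) (P x ψ) : ℂ) = starRingEnd ℂ (inner ℂ (P x ψ) (H ψ)) :=
      (inner_conj_symm _ _).symm
    rw [h1, h3, h2, Complex.conj_im]
  have hsum : HasSum f (-((inner ℂ ψ (P x (H ψ)) : ℂ).im)) := by
    have h1 : HasSum (fun y => P y Φ) Φ := hP_sum Φ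
    have h2 : HasSum (fun y => (inner ℂ ψ (P y Φ) : ℂ)) (inner ℂ ψ Φ : ℂ) :=
      h1.mapL (innerSL ℂ ψ)
    have h3 : HasSum f ((inner ℂ ψ Φ : ℂ).im) :=
      (h2.mapL (Complex.imCLM.restrictScalars ℝ : ℂ →L[ℝ] ℝ))
    rwa [hval] at h3
  have hfsummable : Summable f := hsum.summable
  have hgsummable : Summable (fun y => max (f y) 0) := by
    apply hfsummable.abs.of_nonneg_of_le (fun y => le_max_right _ _)
    intro y
    exact max_le (le_abs_self _) (abs_nonneg _)
  have hle : -((inner ℂ ψ (P x (H ψ)) : ℂ).im) ≤ ∑' y, max (f y) 0 := by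
    rw [← hsum.tsum_eq]
    exact Summable.tsum_le_tsum (fun y => le_max_left _ _) hfsummable hgsummable
  calc ENNReal.ofReal (-((inner ℂ ψ (P x (H ψ)) : ℂ).im))
      ≤ ENNReal.ofReal (∑' y, max (f y) 0) := ENNReal.ofReal_le_ofReal hle
    _ = ∑' y, ENNReal.ofReal (max (f y) 0) :=
        ENNReal.ofReal_tsum_of_nonneg (fun y => le_max_right _ _) hgsummable
    _ = (∑' y, ENNReal.ofReal (max (f y) 0 / μ s x)) * ENNReal.ofReal (μ s x) := by
        have hμ0 : ENNReal.ofReal (μ s x) ≠ 0 := by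
          simp [ENNReal.ofReal_eq_zero, not_le, hpos]
        have hμtop : ENNReal.ofReal (μ s x) ≠ ⊤ := ENNReal.ofReal_ne_top
        have : ∀ y, ENNReal.ofReal (max (f y) 0 / μ s x)
            = ENNReal.ofReal (max (f y) 0) / ENNReal.ofReal (μ s x) := fun y =>
          ENNReal.ofReal_div_of_pos hpos
        simp_rw [this, div_eq_mul_inv]
        rw [ENNReal.tsum_mul_right, mul_assoc,
          ENNReal.inv_mul_cancel hμ0 hμtop, mul_one]
end

section
/- Assume Assumption (A2). If t < u and μ_s(x) > 0 for all s ∈ [t, u], then Γ_{t,x}(u) = ∫_t^u γ_x(s) ds < ∞. -/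
open MeasureTheory
open scoped ENNReal

/-- Under Assumption (A2): if `t < u` and `μ_s(x) > 0` for all
`s ∈ [t, u]`, then `Γ_{t,x}(u) = ∫_t^u γ_x(s) ds < ∞`. -/
theorem bell_Gamma_finite_before_node
    {𝓗 : Type*} [NormedAddCommGroup 𝓗] [InnerProductSpace ℂ 𝓗] [CompleteSpace 𝓗]
    {E : Type*} [Countable E]
    (P : E → 𝓗 →L[ℂ] 𝓗)
    (hP_sa : ∀ x, IsSelfAdjoint (P x))
    (hP_pos : ∀ x (Φ : 𝓗), 0 ≤ (inner ℂ Φ (P x Φ) : ℂ).re)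
    (hP_sum : ∀ Φ : 𝓗, HasSum (fun x => P x Φ) Φ)
    (H : 𝓗 →L[ℂ] 𝓗) (hH : IsSelfAdjoint H)
    (Ψ₀ : 𝓗) (Ψ : ℝ → 𝓗)
    (hΨ : ∀ t : ℝ, Ψ t = NormedSpace.exp ((-(Complex.I * (t : ℂ)) / 2) • H) Ψ₀)
    (μ : ℝ → E → ℝ)
    (hμ : ∀ t x, μ t x = (inner ℂ (Ψ t) (P x (Ψ t)) : ℂ).re)
    (γ : ℝ → E → ℝ≥0∞)
    (hγ : ∀ t x, γ t x = if μ t x = 0 then ⊤ else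
      ∑' y, ENNReal.ofReal
        (max ((inner ℂ (Ψ t) (P y (H (P x (Ψ t)))) : ℂ).im) 0 / μ t x))
    (hA2 : ∀ t₀ t₁ : ℝ, t₀ < t₁ →
      ∫⁻ s in Set.Ioc t₀ t₁,
        ∑' p : E × E,
          ENNReal.ofReal ‖(inner ℂ (Ψ s) (P p.2 (H (P p.1 (Ψ s)))) : ℂ)‖ < ⊤)
    (t u : ℝ) (htu : t < u) (x : E)
    (hpos : ∀ s ∈ Set.Icc t u, 0 < μ s x) :
    ∫⁻ s in Set.Ioc t u, γ s x < ⊤ := by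
  -- Continuity of Ψ
  have hΨc : Continuous Ψ := by
    have h1 : Continuous fun s : ℝ => ((-(Complex.I * (s : ℂ)) / 2) • H : 𝓗 →L[ℂ] 𝓗) := by
      fun_prop
    have h2 : Continuous fun s : ℝ =>
        NormedSpace.exp ((-(Complex.I * (s : ℂ)) / 2) • H) :=
      (continuous_iff_continuousAt.mpr fun a =>
        (NormedSpace.exp_analytic (𝕂 := ℂ) a).continuousAt).comp h1
    have h3 : Continuous fun s : ℝ =>
        NormedSpace.exp ((-(Complex.I * (s : ℂ)) / 2) • H) Ψ₀ :=
      (ContinuousLinearMap.apply ℂ 𝓗 Ψ₀).continuous.comp h2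
    convert h3 using 1
    funext s
    exact hΨ s
  -- Continuity of μ · x
  have hμc : Continuous fun s => μ s x := by
    have : Continuous fun s => (inner ℂ (Ψ s) (P x (Ψ s)) : ℂ) :=
      Continuous.inner hΨc ((P x).continuous.comp hΨc)
    have h4 : Continuous fun s => (inner ℂ (Ψ s) (P x (Ψ s)) : ℂ).re :=
      Complex.continuous_re.comp this
    convert h4 using 1
    funext s
    exact hμ s x
  -- positive minimum ε on Icc
  obtain ⟨s₀, hs₀, hmin⟩ := isCompact_Icc.exists_isMinOn
    (Set.nonempty_Icc.mpr htu.le) hμc.continuousOn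
  set ε := μ s₀ x with hε_def
  have hε : 0 < ε := hpos s₀ hs₀
  have hεle : ∀ s ∈ Set.Icc t u, ε ≤ μ s x := fun s hs => hmin hs
  set F : ℝ → ℝ≥0∞ := fun s =>
    ∑' p : E × E, ENNReal.ofReal ‖(inner ℂ (Ψ s) (P p.2 (H (P p.1 (Ψ s)))) : ℂ)‖ with hF
  -- pointwise bound
  have key : ∀ s ∈ Set.Ioc t u, γ s x ≤ (ENNReal.ofReal ε)⁻¹ * F s := by
    intro s hs
    have hsI : s ∈ Set.Icc t u := Set.Ioc_subset_Icc_self hs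
    have hμpos : 0 < μ s x := hpos s hsI
    rw [hγ s x, if_neg hμpos.ne']
    calc ∑' y, ENNReal.ofReal
          (max ((inner ℂ (Ψ s) (P y (H (P x (Ψ s)))) : ℂ).im) 0 / μ s x)
        ≤ ∑' y, (ENNReal.ofReal ε)⁻¹ *
            ENNReal.ofReal ‖(inner ℂ (Ψ s) (P y (H (P x (Ψ s)))) : ℂ)‖ := by
          refine ENNReal.tsum_le_tsum fun y => ?_
          set z : ℂ := inner ℂ (Ψ s) (P y (H (P x (Ψ s))))
          have h1 : max z.im 0 / μ s x ≤ ‖z‖ / ε := by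
            refine div_le_div₀ (norm_nonneg z) ?_ hε (hεle s hsI)
            refine max_le ?_ (norm_nonneg z)
            calc z.im ≤ |z.im| := le_abs_self _
              _ ≤ ‖z‖ := Complex.abs_im_le_norm z
          calc ENNReal.ofReal (max z.im 0 / μ s x)
              ≤ ENNReal.ofReal (‖z‖ / ε) := ENNReal.ofReal_le_ofReal h1
            _ = ENNReal.ofReal ‖z‖ / ENNReal.ofReal ε := ENNReal.ofReal_div_of_pos hε
            _ = (ENNReal.ofReal ε)⁻¹ * ENNReal.ofReal ‖z‖ := by
                rw [div_eq_mul_inv, mul_comm]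
      _ = (ENNReal.ofReal ε)⁻¹ *
            ∑' y, ENNReal.ofReal ‖(inner ℂ (Ψ s) (P y (H (P x (Ψ s)))) : ℂ)‖ :=
          ENNReal.tsum_mul_left
      _ ≤ (ENNReal.ofReal ε)⁻¹ * F s := by
          refine mul_le_mul_right ?_ _
          exact ENNReal.tsum_comp_le_tsum_of_injective
            (f := fun y : E => ((x, y) : E × E))
            (fun a b h => by simpa using h) _
  -- integrate the bound
  have h1 : ∫⁻ s in Set.Ioc t u, γ s x
      ≤ ∫⁻ s in Set.Ioc t u, (ENNReal.ofReal ε)⁻¹ * F s := by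
    refine lintegral_mono_ae ?_
    filter_upwards [ae_restrict_mem measurableSet_Ioc] with s hs using key s hs
  have h2 : ∫⁻ s in Set.Ioc t u, (ENNReal.ofReal ε)⁻¹ * F s
      = (ENNReal.ofReal ε)⁻¹ * ∫⁻ s in Set.Ioc t u, F s :=
    lintegral_const_mul' _ _ (ENNReal.inv_ne_top.mpr (by simpa using hε))
  refine lt_of_le_of_lt h1 ?_
  rw [h2]
  exact ENNReal.mul_lt_top (ENNReal.inv_ne_top.mpr (by simpa using hε)).lt_top
    (hA2 t u htu)
end

section
/- Assume Assumption (A2). If μ_t(x) > 0 and τ := inf{ s > t : μ_s(x) = 0 } is finite, then Γ_{t,x}(τ) = ∫_t^τ γ_x(s) ds = ∞; that is, the total jump rate diverges as the position x approaches becoming a node, so fast that its integral up to the node time is infinite. -/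
open MeasureTheory
open scoped ENNReal

/-- Under Assumption (A2): if `μ_t(x) > 0` and
`τ := inf { s > t : μ_s(x) = 0 }` is finite (i.e. the set is nonempty), then
`Γ_{t,x}(τ) = ∫_t^τ γ_x(s) ds = ∞`. -/
theorem bell_Gamma_infinite_at_node
    {𝓗 : Type*} [NormedAddCommGroup 𝓗] [InnerProductSpace ℂ 𝓗] [CompleteSpace 𝓗]
    {E : Type*} [Countable E]
    (P : E → 𝓗 →L[ℂ] 𝓗)
    (hP_sa : ∀ x, IsSelfAdjoint (P x))
    (hP_pos : ∀ x (Φ : 𝓗), 0 ≤ (inner ℂ Φ (P x Φ) : ℂ).re)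
    (hP_sum : ∀ Φ : 𝓗, HasSum (fun x => P x Φ) Φ)
    (H : 𝓗 →L[ℂ] 𝓗) (hH : IsSelfAdjoint H)
    (Ψ₀ : 𝓗) (Ψ : ℝ → 𝓗)
    (hΨ : ∀ t : ℝ, Ψ t = NormedSpace.exp ((-(Complex.I * (t : ℂ)) / 2) • H) Ψ₀)
    (μ : ℝ → E → ℝ)
    (hμ : ∀ t x, μ t x = (inner ℂ (Ψ t) (P x (Ψ t)) : ℂ).re)
    (γ : ℝ → E → ℝ≥0∞)
    (hγ : ∀ t x, γ t x = if μ t x = 0 then ⊤ else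
      ∑' y, ENNReal.ofReal
        (max ((inner ℂ (Ψ t) (P y (H (P x (Ψ t)))) : ℂ).im) 0 / μ t x))
    (hA2 : ∀ t₀ t₁ : ℝ, t₀ < t₁ →
      ∫⁻ s in Set.Ioc t₀ t₁,
        ∑' p : E × E,
          ENNReal.ofReal ‖(inner ℂ (Ψ s) (P p.2 (H (P p.1 (Ψ s)))) : ℂ)‖ < ⊤)
    (t : ℝ) (x : E) (hpos : 0 < μ t x)
    (hne : {s : ℝ | t < s ∧ μ s x = 0}.Nonempty) :
    ∫⁻ s in Set.Ioc t (sInf {s : ℝ | t < s ∧ μ s x = 0}), γ s x = ⊤ := by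
  classical
  set S : Set ℝ := {s : ℝ | t < s ∧ μ s x = 0} with hS
  set τ : ℝ := sInf S with hτ
  set A : 𝓗 →L[ℂ] 𝓗 := (-(Complex.I)/2) • H with hA
  -- Ψ as a real-parameter exponential
  have hΨR : ∀ s : ℝ, Ψ s = NormedSpace.exp (s • A) Ψ₀ := by
    intro s
    have harg : s • A = (-(Complex.I * (s : ℂ))/2) • H := by
      rw [hA, ← Complex.coe_smul, smul_smul]
      congr 1
      ring
    rw [hΨ s, harg]
  -- derivative of Ψ
  have hDer : ∀ s : ℝ, HasDerivAt Ψ (A (Ψ s)) s := by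
    intro s
    have h := hasDerivAt_exp_smul_const' (𝕂 := ℝ) A s
    have h2 := ((ContinuousLinearMap.apply ℂ 𝓗 Ψ₀).restrictScalars ℝ).hasFDerivAt.comp_hasDerivAt s h
    have h3 : HasDerivAt (fun u : ℝ => NormedSpace.exp (u • A) Ψ₀)
        (A (NormedSpace.exp (s • A) Ψ₀)) s := by
      simpa [ContinuousLinearMap.mul_apply, Function.comp_def] using h2
    have hfun : (fun u : ℝ => NormedSpace.exp (u • A) Ψ₀) = Ψ := by
      funext u; exact (hΨR u).symm
    rw [hfun, ← hΨR s] at h3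
    exact h3
  have hΨc : Continuous Ψ := continuous_iff_continuousAt.mpr fun s => (hDer s).continuousAt
  -- derivative of μ · x
  have hf' : ∀ s : ℝ, HasDerivAt (fun u => μ u x)
      ((inner ℂ (Ψ s) (P x (H (Ψ s))) : ℂ).im) s := by
    intro s
    have hg : HasDerivAt (fun u => P x (Ψ u)) (P x (A (Ψ s))) s := by
      exact (((P x).restrictScalars ℝ).hasFDerivAt.comp_hasDerivAt s (hDer s))
    have hc := HasDerivAt.inner ℂ (hDer s) hg
    have hre := Complex.reCLM.hasFDerivAt.comp_hasDerivAt s hc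
    have hre2 : HasDerivAt (fun u => μ u x)
        (Complex.reCLM ((inner ℂ (Ψ s) (P x (A (Ψ s))) : ℂ) + (inner ℂ (A (Ψ s)) (P x (Ψ s)) : ℂ))) s := by
      refine hre.congr_of_eventuallyEq (Filter.Eventually.of_forall fun u => ?_)
      simp [hμ u x]
    convert hre2 using 1
    -- value computation
    show (inner ℂ (Ψ s) (P x (H (Ψ s))) : ℂ).im
        = Complex.reCLM ((inner ℂ (Ψ s) (P x (A (Ψ s))) : ℂ) + (inner ℂ (A (Ψ s)) (P x (Ψ s)) : ℂ))
    have hA_app : A (Ψ s) = (-(Complex.I)/2) • H (Ψ s) := by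
      rw [hA]; simp
    set z : ℂ := inner ℂ (Ψ s) (P x (H (Ψ s))) with hz
    have h1 : (inner ℂ (Ψ s) (P x (A (Ψ s))) : ℂ) = (-(Complex.I)/2) * z := by
      rw [hA_app, _root_.map_smul, inner_smul_right]
    have h2 : (inner ℂ (A (Ψ s)) (P x (Ψ s)) : ℂ) = (starRingEnd ℂ) ((-(Complex.I)/2) * z) := by
      rw [hA_app, inner_smul_left, map_mul]
      congr 1
      rw [← inner_conj_symm]
      congr 1
      exact (hP_sa x).isSymmetric (Ψ s) (H (Ψ s))
    rw [h1, h2]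
    show z.im = ((-(Complex.I)/2) * z + (starRingEnd ℂ) ((-(Complex.I)/2) * z)).re
    obtain ⟨a, b⟩ := z
    simp [Complex.mul_re, Complex.mul_im, Complex.div_re, Complex.div_im]
    ring
  -- the sum identity
  have hHS : ∀ s : ℝ, HasSum (fun y => (inner ℂ (Ψ s) (P y (H (P x (Ψ s)))) : ℂ).im)
      (-((inner ℂ (Ψ s) (P x (H (Ψ s))) : ℂ).im)) := by
    intro s
    have h0 : HasSum (fun y => (inner ℂ (Ψ s) (P x (H (P y (Ψ s)))) : ℂ))
        (inner ℂ (Ψ s) (P x (H (Ψ s))) : ℂ) := by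
      have := ((innerSL ℂ (Ψ s)).comp ((P x).comp H)).hasSum (hP_sum (Ψ s))
      simpa using this
    have h1 : HasSum (fun y => (inner ℂ (Ψ s) (P x (H (P y (Ψ s)))) : ℂ).im)
        ((inner ℂ (Ψ s) (P x (H (Ψ s))) : ℂ).im) := by
      simpa using Complex.imCLM.hasSum h0
    have hterm : ∀ y, (inner ℂ (Ψ s) (P x (H (P y (Ψ s)))) : ℂ).im
        = -((inner ℂ (Ψ s) (P y (H (P x (Ψ s)))) : ℂ).im) := by
      intro y
      have e1 : (inner ℂ (Ψ s) (P x (H (P y (Ψ s)))) : ℂ)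
          = (starRingEnd ℂ) (inner ℂ (Ψ s) (P y (H (P x (Ψ s)))) : ℂ) := by
        calc (inner ℂ (Ψ s) (P x (H (P y (Ψ s)))) : ℂ)
            = (inner ℂ (P x (Ψ s)) (H (P y (Ψ s))) : ℂ) := ((hP_sa x).isSymmetric _ _).symm
          _ = (inner ℂ (H (P x (Ψ s))) (P y (Ψ s)) : ℂ) := (hH.isSymmetric _ _).symm
          _ = (inner ℂ (P y (H (P x (Ψ s)))) (Ψ s) : ℂ) := ((hP_sa y).isSymmetric _ _).symm
          _ = (starRingEnd ℂ) (inner ℂ (Ψ s) (P y (H (P x (Ψ s)))) : ℂ) :=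
              (inner_conj_symm _ _).symm
      rw [e1, Complex.conj_im]
    have h2 := h1.neg
    simp only [hterm, neg_neg] at h2
    exact h2
  -- continuity facts
  have hμc : Continuous fun s => μ s x := by
    have hfun : (fun s => μ s x) = fun s => (inner ℂ (Ψ s) (P x (Ψ s)) : ℂ).re :=
      funext fun s => hμ s x
    rw [hfun]
    exact Complex.continuous_re.comp (Continuous.inner hΨc ((P x).continuous.comp hΨc))
  have himc : Continuous fun s => (inner ℂ (Ψ s) (P x (H (Ψ s))) : ℂ).im := by
    have : Continuous fun s => (inner ℂ (Ψ s) (P x (H (Ψ s))) : ℂ) :=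
      Continuous.inner hΨc ((P x).continuous.comp (H.continuous.comp hΨc))
    exact Complex.continuous_im.comp this
  -- nonnegativity of μ
  have hμnn : ∀ s, 0 ≤ μ s x := fun s => (hμ s x) ▸ hP_pos x (Ψ s)
  -- basic facts about τ
  have hbdd : BddBelow S := ⟨t, fun s hs => le_of_lt hs.1⟩
  have hμτ : μ τ x = 0 := by
    have hclosed : IsClosed {s : ℝ | μ s x = 0} := isClosed_eq hμc continuous_const
    have hsub : S ⊆ {s : ℝ | μ s x = 0} := fun s hs => hs.2
    have := csInf_mem_closure hne hbdd
    have := closure_minimal hsub hclosed this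
    exact this
  have htτ : t < τ := by
    obtain ⟨δ, hδ, hδ2⟩ := Metric.continuousAt_iff.mp hμc.continuousAt (μ t x) hpos
    have : t + δ ≤ τ := by
      refine le_csInf hne fun s hs => ?_
      by_contra hlt
      push_neg at hlt
      have hd : dist s t < δ := by
        rw [Real.dist_eq, abs_of_pos (sub_pos.mpr hs.1)]; linarith
      have := hδ2 hd
      rw [hs.2, Real.dist_eq] at this
      rw [abs_of_nonpos (by linarith)] at this
      linarith
    linarith
  have hfpos : ∀ s, t < s → s < τ → 0 < μ s x := by
    intro s hts hsτ
    rcases lt_or_eq_of_le (hμnn s) with h | h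
    · exact h
    · exfalso
      have : s ∈ S := ⟨hts, h.symm⟩
      exact absurd (csInf_le hbdd this) (not_le.mpr hsτ)
  -- the key pointwise bound on γ
  have hγ_bound : ∀ s, t < s → s < τ →
      ENNReal.ofReal (-((inner ℂ (Ψ s) (P x (H (Ψ s))) : ℂ).im) / μ s x) ≤ γ s x := by
    intro s hts hsτ
    have h0 : 0 < μ s x := hfpos s hts hsτ
    set J : E → ℝ := fun y => (inner ℂ (Ψ s) (P y (H (P x (Ψ s)))) : ℂ).im with hJ
    have hγs : γ s x = ∑' y, ENNReal.ofReal (max (J y) 0 / μ s x) := by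
      rw [hγ s x, if_neg (ne_of_gt h0)]
    rw [hγs]
    by_cases hsum : Summable fun y => max (J y) 0
    · have h1 : -((inner ℂ (Ψ s) (P x (H (Ψ s))) : ℂ).im) ≤ ∑' y, max (J y) 0 := by
        rw [← (hHS s).tsum_eq]
        exact Summable.tsum_le_tsum (fun y => le_max_left _ _) (hHS s).summable hsum
      have h2 : -((inner ℂ (Ψ s) (P x (H (Ψ s))) : ℂ).im) / μ s x
          ≤ ∑' y, max (J y) 0 / μ s x := by
        rw [tsum_div_const]
        gcongr
      refine le_trans (ENNReal.ofReal_le_ofReal h2) ?_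
      rw [ENNReal.ofReal_tsum_of_nonneg
        (fun y => div_nonneg (le_max_right _ _) h0.le) (hsum.div_const _)]
    · -- the tsum is infinite
      have htop : (∑' y, ENNReal.ofReal (max (J y) 0 / μ s x)) = ⊤ := by
        by_contra hnetop
        have hsum2 : Summable fun y => Real.toNNReal (max (J y) 0 / μ s x) := by
          rw [← ENNReal.tsum_coe_ne_top_iff_summable]
          exact hnetop
        have hsum3 : Summable fun y => max (J y) 0 / μ s x := by
          refine Summable.congr (NNReal.summable_coe.mpr hsum2) fun y => ?_
          exact Real.coe_toNNReal _ (div_nonneg (le_max_right _ _) h0.le)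
        have := hsum3.mul_right (μ s x)
        refine hsum ?_
        refine Summable.congr this fun y => ?_
        field_simp
      rw [htop]
      exact le_top
  -- main argument
  rw [eq_top_iff]
  by_contra hfin
  push_neg at hfin
  obtain ⟨n, hn⟩ := ENNReal.exists_nat_gt hfin.ne_top
  have hmain : (n : ℝ≥0∞) ≤ ∫⁻ s in Set.Ioc t τ, γ s x := by
    set t' : ℝ := (t + τ) / 2 with ht'
    have htt' : t < t' := by rw [ht']; linarith
    have ht'τ : t' < τ := by rw [ht']; linarith
    have ht'pos : 0 < μ t' x := hfpos t' htt' ht'τ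
    -- choose u near τ with μ u x small
    set ε : ℝ := μ t' x * Real.exp (-(n : ℝ)) with hε
    have hεpos : 0 < ε := mul_pos ht'pos (Real.exp_pos _)
    obtain ⟨δ, hδ, hδ2⟩ := Metric.continuousAt_iff.mp hμc.continuousAt ε hεpos
    have hmaxlt : max t' (τ - δ) < τ := max_lt ht'τ (by linarith)
    obtain ⟨u, hu1, hu2⟩ := exists_between hmaxlt
    have ht'u : t' < u := lt_of_le_of_lt (le_max_left _ _) hu1
    have htu : t < u := lt_trans htt' ht'u
    have hupos : 0 < μ u x := hfpos u htu hu2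
    have husmall : μ u x < ε := by
      have hd : dist u τ < δ := by
        rw [Real.dist_eq, abs_of_nonpos (by linarith)]
        have := lt_of_le_of_lt (le_max_right t' (τ - δ)) hu1
        linarith
      have := hδ2 hd
      rw [hμτ, Real.dist_eq, sub_zero, abs_of_nonneg (hμnn u)] at this
      exact this
    have hlog : Real.log (μ u x) < Real.log (μ t' x) - n := by
      have := Real.log_lt_log hupos husmall
      rwa [hε, Real.log_mul (ne_of_gt ht'pos) (ne_of_gt (Real.exp_pos _)),
        Real.log_exp] at this
    -- FTC on [t', u]
    set g : ℝ → ℝ := fun s => -((inner ℂ (Ψ s) (P x (H (Ψ s))) : ℂ).im) / μ s x with hg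
    have hIccsub : Set.Icc t' u ⊆ Set.Ioo t τ := fun s hs =>
      ⟨lt_of_lt_of_le htt' hs.1, lt_of_le_of_lt hs.2 hu2⟩
    have hgcont : ContinuousOn g (Set.Icc t' u) := by
      refine ContinuousOn.div (himc.neg.continuousOn) (hμc.continuousOn) fun s hs => ?_
      exact ne_of_gt (hfpos s (hIccsub hs).1 (hIccsub hs).2)
    have hgint : IntervalIntegrable g MeasureTheory.volume t' u := by
      refine ContinuousOn.intervalIntegrable ?_
      rwa [Set.uIcc_of_le ht'u.le]
    have hftc : ∫ s in t'..u, g s = Real.log (μ t' x) - Real.log (μ u x) := by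
      have hderiv : ∀ s ∈ Set.uIcc t' u,
          HasDerivAt (fun r => -Real.log (μ r x)) (g s) s := by
        intro s hs
        rw [Set.uIcc_of_le ht'u.le] at hs
        have hpos' : 0 < μ s x := hfpos s (hIccsub hs).1 (hIccsub hs).2
        have := ((hf' s).log (ne_of_gt hpos')).neg
        rwa [← neg_div] at this
      rw [intervalIntegral.integral_eq_sub_of_hasDerivAt hderiv hgint]
      ring
    -- lintegral bound
    have step1 : (n : ℝ≥0∞) ≤ ENNReal.ofReal (∫ s in t'..u, g s) := by
      rw [hftc, ← ENNReal.ofReal_natCast n]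
      exact ENNReal.ofReal_le_ofReal (by linarith)
    have hgOn : IntegrableOn g (Set.Ioc t' u) MeasureTheory.volume :=
      (intervalIntegrable_iff_integrableOn_Ioc_of_le ht'u.le).mp hgint
    have hmaxOn : IntegrableOn (fun s => max (g s) 0) (Set.Ioc t' u) MeasureTheory.volume :=
      hgOn.pos_part
    have step2 : ENNReal.ofReal (∫ s in t'..u, g s)
        ≤ ENNReal.ofReal (∫ s in Set.Ioc t' u, max (g s) 0) := by
      rw [intervalIntegral.integral_of_le ht'u.le]
      exact ENNReal.ofReal_le_ofReal
        (integral_mono hgOn hmaxOn fun s => le_max_left _ _)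
    have step3 : ENNReal.ofReal (∫ s in Set.Ioc t' u, max (g s) 0)
        = ∫⁻ s in Set.Ioc t' u, ENNReal.ofReal (g s) := by
      rw [ofReal_integral_eq_lintegral_ofReal hmaxOn
        (Filter.Eventually.of_forall fun s => le_max_right _ _)]
      refine lintegral_congr fun s => ?_
      rcases le_total (g s) 0 with h | h
      · rw [max_eq_right h, ENNReal.ofReal_of_nonpos h, ENNReal.ofReal_zero]
      · rw [max_eq_left h]
    have step4 : (∫⁻ s in Set.Ioc t' u, ENNReal.ofReal (g s))
        ≤ ∫⁻ s in Set.Ioc t' u, γ s x := by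
      refine lintegral_mono_ae ?_
      rw [ae_restrict_iff' measurableSet_Ioc]
      refine Filter.Eventually.of_forall fun s hs => ?_
      exact hγ_bound s (lt_trans htt' hs.1) (lt_of_le_of_lt hs.2 hu2)
    have step5 : (∫⁻ s in Set.Ioc t' u, γ s x) ≤ ∫⁻ s in Set.Ioc t τ, γ s x :=
      lintegral_mono_set (Set.Ioc_subset_Ioc htt'.le hu2.le)
    calc (n : ℝ≥0∞) ≤ _ := step1
      _ ≤ _ := step2
      _ = _ := step3
      _ ≤ _ := step4
      _ ≤ _ := step5
  exact absurd (lt_of_le_of_lt hmain hn) (lt_irrefl _)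
end

section
/- For every t ∈ ℝ and x ∈ E, the following balance (master) equation holds, with an absolutely convergent sum: Im ⟪Ψ_t, P(x) H Ψ_t⟫ = ∑_{y∈E} ( [Im ⟪Ψ_t, P(x) H P(y) Ψ_t⟫]⁺ − [Im ⟪Ψ_t, P(y) H P(x) Ψ_t⟫]⁺ ); i.e., the time derivative of μ_t(x) equals the net probability current ∑_y ( μ_t(y) σ_t(x|y) − μ_t(x) σ_t(y|x) ) into x given by Bell's jump rates. -/
/-- Balance (master) equation: for every `t` and `x`, with an
absolutely convergent sum,
`Im ⟪Ψ_t, P(x) H Ψ_t⟫ = ∑_{y} ([Im ⟪Ψ_t, P(x) H P(y) Ψ_t⟫]⁺ − [Im ⟪Ψ_t, P(y) H P(x) Ψ_t⟫]⁺)`. -/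
theorem bell_master_equation
    {𝓗 : Type*} [NormedAddCommGroup 𝓗] [InnerProductSpace ℂ 𝓗] [CompleteSpace 𝓗]
    {E : Type*} [Countable E]
    (P : E → 𝓗 →L[ℂ] 𝓗)
    (hP_sa : ∀ x, IsSelfAdjoint (P x))
    (hP_pos : ∀ x (Φ : 𝓗), 0 ≤ (inner ℂ Φ (P x Φ) : ℂ).re)
    (hP_sum : ∀ Φ : 𝓗, HasSum (fun x => P x Φ) Φ)
    (H : 𝓗 →L[ℂ] 𝓗) (hH : IsSelfAdjoint H)
    (Ψ₀ : 𝓗) (Ψ : ℝ → 𝓗)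
    (hΨ : ∀ t : ℝ, Ψ t = NormedSpace.exp ((-(Complex.I * (t : ℂ)) / 2) • H) Ψ₀)
    (t : ℝ) (x : E) :
    Summable (fun y =>
      |max ((inner ℂ (Ψ t) (P x (H (P y (Ψ t)))) : ℂ).im) 0 -
        max ((inner ℂ (Ψ t) (P y (H (P x (Ψ t)))) : ℂ).im) 0|) ∧
    HasSum (fun y =>
      max ((inner ℂ (Ψ t) (P x (H (P y (Ψ t)))) : ℂ).im) 0 -
        max ((inner ℂ (Ψ t) (P y (H (P x (Ψ t)))) : ℂ).im) 0)
      ((inner ℂ (Ψ t) (P x (H (Ψ t))) : ℂ).im) := by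
  set Φ := Ψ t
  set a : E → ℝ := fun y => (inner ℂ Φ (P x (H (P y Φ))) : ℂ).im with ha
  have hb : ∀ y, (inner ℂ Φ (P y (H (P x Φ))) : ℂ).im = - a y := by
    intro y
    have h1 : (inner ℂ Φ (P y (H (P x Φ))) : ℂ)
        = (starRingEnd ℂ) (inner ℂ Φ (P x (H (P y Φ))) : ℂ) := by
      calc (inner ℂ Φ (P y (H (P x Φ))) : ℂ)
          = inner ℂ (P y Φ) (H (P x Φ)) := ((hP_sa y).isSymmetric Φ (H (P x Φ))).symm
        _ = inner ℂ (H (P y Φ)) (P x Φ) := (hH.isSymmetric (P y Φ) (P x Φ)).symm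
        _ = inner ℂ (P x (H (P y Φ))) Φ := ((hP_sa x).isSymmetric (H (P y Φ)) Φ).symm
        _ = (starRingEnd ℂ) (inner ℂ Φ (P x (H (P y Φ))) : ℂ) := (inner_conj_symm _ _).symm
    rw [h1, Complex.conj_im]
  have key : ∀ r : ℝ, max r 0 - max (-r) 0 = r := by
    intro r
    rcases le_total r 0 with h | h
    · rw [max_eq_right h, max_eq_left (by linarith)]; ring
    · rw [max_eq_left h, max_eq_right (by linarith)]; ring
  have hsimp : ∀ y, max ((inner ℂ Φ (P x (H (P y Φ))) : ℂ).im) 0 -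
        max ((inner ℂ Φ (P y (H (P x Φ))) : ℂ).im) 0 = a y := by
    intro y; rw [hb y]; exact key (a y)
  have heq : (fun y => max ((inner ℂ Φ (P x (H (P y Φ))) : ℂ).im) 0 -
        max ((inner ℂ Φ (P y (H (P x Φ))) : ℂ).im) 0) = a := funext hsimp
  have hsum : HasSum a ((inner ℂ Φ (P x (H Φ)) : ℂ).im) := by
    have h1 : HasSum (fun y => P x (H (P y Φ))) (P x (H Φ)) :=
      ((hP_sum Φ).mapL H).mapL (P x)
    have h2 : HasSum (fun y => (inner ℂ Φ (P x (H (P y Φ))) : ℂ))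
        (inner ℂ Φ (P x (H Φ))) := h1.mapL (innerSL ℂ Φ)
    exact h2.mapL Complex.imCLM
  constructor
  · have heq2 : (fun y => |max ((inner ℂ Φ (P x (H (P y Φ))) : ℂ).im) 0 -
        max ((inner ℂ Φ (P y (H (P x Φ))) : ℂ).im) 0|) = fun y => |a y| :=
      funext fun y => by rw [hsimp y]
    rw [heq2]
    exact summable_abs_iff.mpr hsum.summable
  · rw [heq]; exact hsum
end

section
/- Define A₀(t,x) = μ_{t₀}(x) e^{−Γ_{t₀,x}(t)} and, recursively for n ≥ 1, A_n(t,x) = ∑_{y∈E} ∫_{t₀}^t A_{n−1}(s,y) σ_s(x|y) e^{−Γ_{s,x}(t)} ds. If ρ : [t₀,∞) × E → [0,∞) is any nonnegative solution of the integral equation ρ_t(x) = μ_{t₀}(x) e^{−Γ_{t₀,x}(t)} + ∑_{y∈E} ∫_{t₀}^t ρ_s(y) σ_s(x|y) e^{−Γ_{s,x}(t)} ds (products ρ_s(y)σ_s(x|y) interpreted in [0,∞] with the convention 0·∞ = 0), then ρ_t(x) ≥ ∑_{n=0}^{N−1} A_n(t,x) for every N ≥ 1, every t ≥ t₀ and every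 x ∈ E. -/
open MeasureTheory
open scoped ENNReal

private lemma sum_tsum_comm_aux {ι β : Type*} (s : Finset ι) (f : ι → β → ℝ≥0∞) :
    ∑ i ∈ s, ∑' b, f i b = ∑' b, ∑ i ∈ s, f i b := by
  classical
  induction s using Finset.induction with
  | empty => simp
  | insert _ _ h ih =>
    rename_i a t
    simp only [Finset.sum_insert h, ih, ENNReal.tsum_add]

private lemma sum_lintegral_le_aux {α : Type*} {ι : Type*} [MeasurableSpace α]
    (ν : MeasureTheory.Measure α) (s : Finset ι) (f : ι → α → ℝ≥0∞) :
    ∑ i ∈ s, ∫⁻ a, f i a ∂ν ≤ ∫⁻ a, ∑ i ∈ s, f i a ∂ν := by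
  classical
  induction s using Finset.induction with
  | empty => simp
  | insert _ _ h ih =>
    rename_i a t
    simp only [Finset.sum_insert h]
    calc (∫⁻ x, f a x ∂ν) + ∑ i ∈ t, ∫⁻ x, f i x ∂ν
        ≤ (∫⁻ x, f a x ∂ν) + ∫⁻ x, ∑ i ∈ t, f i x ∂ν := by gcongr
      _ ≤ ∫⁻ x, f a x + ∑ i ∈ t, f i x ∂ν := MeasureTheory.le_lintegral_add _ _

/-- Minimality: any nonnegative solution `ρ` of the jump-process
integral equation dominates every partial sum `∑_{n<N} A_n(t,x)` of the iterates
`A₀(t,x) = μ_{t₀}(x) e^{−Γ_{t₀,x}(t)}`,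
`A_n(t,x) = ∑_y ∫_{t₀}^t A_{n−1}(s,y) σ_s(x|y) e^{−Γ_{s,x}(t)} ds`,
where products are interpreted in `[0,∞]` with `0·∞ = 0` and `e^{−∞} := 0`. -/
theorem bell_iterates_minorize_solution
    {𝓗 : Type*} [NormedAddCommGroup 𝓗] [InnerProductSpace ℂ 𝓗] [CompleteSpace 𝓗]
    {E : Type*} [Countable E]
    (P : E → 𝓗 →L[ℂ] 𝓗)
    (hP_sa : ∀ x, IsSelfAdjoint (P x))
    (hP_pos : ∀ x (Φ : 𝓗), 0 ≤ (inner ℂ Φ (P x Φ) : ℂ).re)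
    (hP_sum : ∀ Φ : 𝓗, HasSum (fun x => P x Φ) Φ)
    (H : 𝓗 →L[ℂ] 𝓗) (hH : IsSelfAdjoint H)
    (Ψ₀ : 𝓗) (Ψ : ℝ → 𝓗)
    (hΨ : ∀ t : ℝ, Ψ t = NormedSpace.exp ((-(Complex.I * (t : ℂ)) / 2) • H) Ψ₀)
    (μ : ℝ → E → ℝ)
    (hμ : ∀ t x, μ t x = (inner ℂ (Ψ t) (P x (Ψ t)) : ℂ).re)
    -- Bell's jump rate `σ_t(x|y)` (from `y` to `x`), valued in `[0,∞]`,
    -- set to `∞` at nodes: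
    (σ : ℝ → E → E → ℝ≥0∞)
    (hσ : ∀ t (x y : E), σ t x y = if μ t y = 0 then ⊤ else
      ENNReal.ofReal
        (max ((inner ℂ (Ψ t) (P x (H (P y (Ψ t)))) : ℂ).im) 0 / μ t y))
    -- total jump rate `γ_x(t) = ∑_y σ_t(y|x)`:
    (γ : ℝ → E → ℝ≥0∞) (hγ : ∀ t x, γ t x = ∑' y, σ t y x)
    -- `Γ_{s,x}(u) = ∫_s^u γ_x(r) dr`:
    (Γ : ℝ → ℝ → E → ℝ≥0∞)
    (hΓ : ∀ s u x, Γ s u x = ∫⁻ r in Set.Ioc s u, γ r x)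
    -- `expNeg a = e^{−a}` with `e^{−∞} := 0`:
    (expNeg : ℝ≥0∞ → ℝ≥0∞)
    (hexpNeg : ∀ a, expNeg a = if a = ⊤ then 0 else ENNReal.ofReal (Real.exp (-a.toReal)))
    -- starting time:
    (t₀ : ℝ)
    -- the iterates:
    (A : ℕ → ℝ → E → ℝ≥0∞)
    (hA0 : ∀ t x, A 0 t x = ENNReal.ofReal (μ t₀ x) * expNeg (Γ t₀ t x))
    (hAsucc : ∀ n t x, A (n + 1) t x =
      ∑' y, ∫⁻ s in Set.Ioc t₀ t, A n s y * σ s x y * expNeg (Γ s t x))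
    -- a nonnegative (finite-valued) solution of the integral equation:
    (ρ : ℝ → E → ℝ≥0∞)
    (hρfin : ∀ t x, t₀ ≤ t → ρ t x ≠ ⊤)
    (hρ : ∀ t x, t₀ ≤ t → ρ t x =
      ENNReal.ofReal (μ t₀ x) * expNeg (Γ t₀ t x) +
        ∑' y, ∫⁻ s in Set.Ioc t₀ t, ρ s y * σ s x y * expNeg (Γ s t x)) :
    ∀ N : ℕ, 1 ≤ N → ∀ t, t₀ ≤ t → ∀ x,
      ∑ n ∈ Finset.range N, A n t x ≤ ρ t x := by
  have key : ∀ N : ℕ, ∀ t, t₀ ≤ t → ∀ x, ∑ n ∈ Finset.range N, A n t x ≤ ρ t x := by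
    intro N
    induction N with
    | zero => simp
    | succ N ih =>
      intro t ht x
      rw [Finset.sum_range_succ', hρ t x ht, add_comm (ENNReal.ofReal (μ t₀ x) * expNeg (Γ t₀ t x))]
      gcongr
      · calc ∑ n ∈ Finset.range N, A (n + 1) t x
            = ∑ n ∈ Finset.range N, ∑' y,
                ∫⁻ s in Set.Ioc t₀ t, A n s y * σ s x y * expNeg (Γ s t x) := by
              simp only [hAsucc]
          _ = ∑' y, ∑ n ∈ Finset.range N,
                ∫⁻ s in Set.Ioc t₀ t, A n s y * σ s x y * expNeg (Γ s t x) :=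
              sum_tsum_comm_aux _ _
          _ ≤ ∑' y, ∫⁻ s in Set.Ioc t₀ t,
                ∑ n ∈ Finset.range N, A n s y * σ s x y * expNeg (Γ s t x) := by
              exact ENNReal.tsum_le_tsum fun y => sum_lintegral_le_aux _ _ _
          _ ≤ ∑' y, ∫⁻ s in Set.Ioc t₀ t, ρ s y * σ s x y * expNeg (Γ s t x) := by
              refine ENNReal.tsum_le_tsum fun y => ?_
              refine MeasureTheory.setLIntegral_mono' measurableSet_Ioc fun s hs => ?_
              simp only [← Finset.sum_mul]
              gcongr
              exact ih s hs.1.le y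
      · rw [hA0]
  exact fun N _ => key N
end

section
/- Let H be a self-adjoint Hilbert–Schmidt operator on 𝓗 with tr H² = ∑_n ‖H e_n‖² < ∞. Then for every Ψ ∈ 𝓗, ∑_{x,y∈E} |⟪Ψ, P(x) H P(y) Ψ⟫| ≤ ‖Ψ‖² · √(tr H²). -/
open scoped ComplexConjugate

lemma cs_pos_sq {𝓗 : Type*} [NormedAddCommGroup 𝓗] [InnerProductSpace ℂ 𝓗] [CompleteSpace 𝓗]
    (T : 𝓗 →L[ℂ] 𝓗) (hsa : IsSelfAdjoint T)
    (hpos : ∀ Φ : 𝓗, 0 ≤ (inner ℂ Φ (T Φ) : ℂ).re) (a b : 𝓗) :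
    ‖(inner ℂ a (T b) : ℂ)‖ ^ 2 ≤ (inner ℂ a (T a) : ℂ).re * (inner ℂ b (T b) : ℂ).re := by
  have hsym : ∀ x y : 𝓗, (inner ℂ (T x) y : ℂ) = inner ℂ x (T y) := fun x y => hsa.isSymmetric x y
  let c : PreInnerProductSpace.Core ℂ 𝓗 :=
  { inner := fun x y => inner ℂ x (T y)
    conj_inner_symm := fun x y => by
      simpa only [inner_conj_symm] using hsym x y
    re_inner_nonneg := hpos
    add_left := fun x y z => inner_add_left x y (T z)
    smul_left := fun x y r => inner_smul_left x (T y) r }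
  have h := @InnerProductSpace.Core.inner_mul_inner_self_le ℂ 𝓗 _ _ _ c a b
  have h' : ‖(inner ℂ a (T b) : ℂ)‖ * ‖(inner ℂ b (T a) : ℂ)‖ ≤
      (inner ℂ a (T a) : ℂ).re * (inner ℂ b (T b) : ℂ).re := h
  have hba : (inner ℂ b (T a) : ℂ) = conj (inner ℂ a (T b) : ℂ) := by
    rw [← hsym a b, inner_conj_symm]
  rw [hba, RCLike.norm_conj, ← sq] at h'
  exact h'

lemma cs_pos_sqrt {𝓗 : Type*} [NormedAddCommGroup 𝓗] [InnerProductSpace ℂ 𝓗] [CompleteSpace 𝓗]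
    (T : 𝓗 →L[ℂ] 𝓗) (hsa : IsSelfAdjoint T)
    (hpos : ∀ Φ : 𝓗, 0 ≤ (inner ℂ Φ (T Φ) : ℂ).re) (a b : 𝓗) :
    ‖(inner ℂ a (T b) : ℂ)‖ ≤
      Real.sqrt (inner ℂ a (T a) : ℂ).re * Real.sqrt (inner ℂ b (T b) : ℂ).re := by
  have h := cs_pos_sq T hsa hpos a b
  calc ‖(inner ℂ a (T b) : ℂ)‖ = Real.sqrt (‖(inner ℂ a (T b) : ℂ)‖ ^ 2) := by
        rw [Real.sqrt_sq (norm_nonneg _)]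
    _ ≤ Real.sqrt ((inner ℂ a (T a) : ℂ).re * (inner ℂ b (T b) : ℂ).re) := Real.sqrt_le_sqrt h
    _ = _ := Real.sqrt_mul (hpos a) _

/-- For a self-adjoint Hilbert–Schmidt operator `H` with
`tr H² = ∑_n ‖H e_n‖² < ∞` and any `Ψ ∈ 𝓗`,
`∑_{x,y∈E} |⟪Ψ, P(x) H P(y) Ψ⟫| ≤ ‖Ψ‖² · √(tr H²)`. -/
theorem povm_hilbertSchmidt_double_sum_bound
    {𝓗 : Type*} [NormedAddCommGroup 𝓗] [InnerProductSpace ℂ 𝓗] [CompleteSpace 𝓗]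
    (e : HilbertBasis ℕ ℂ 𝓗)
    {E : Type*} [Countable E]
    (P : E → 𝓗 →L[ℂ] 𝓗)
    (hP_sa : ∀ x, IsSelfAdjoint (P x))
    (hP_pos : ∀ x (Φ : 𝓗), 0 ≤ (inner ℂ Φ (P x Φ) : ℂ).re)
    (hP_sum : ∀ Φ : 𝓗, HasSum (fun x => P x Φ) Φ)
    (H : 𝓗 →L[ℂ] 𝓗) (hH : IsSelfAdjoint H)
    (hHS : Summable fun n => ‖H (e n)‖ ^ 2)
    (Ψ : 𝓗) :
    Summable (fun p : E × E => ‖(inner ℂ Ψ (P p.1 (H (P p.2 Ψ))) : ℂ)‖) ∧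
    ∑' p : E × E, ‖(inner ℂ Ψ (P p.1 (H (P p.2 Ψ))) : ℂ)‖ ≤
      ‖Ψ‖ ^ 2 * Real.sqrt (∑' n, ‖H (e n)‖ ^ 2) := by
  set t : E × E → ℝ := fun p => ‖(inner ℂ Ψ (P p.1 (H (P p.2 Ψ))) : ℂ)‖ with ht
  set T : ℝ := ∑' n, ‖H (e n)‖ ^ 2 with hT
  -- (2) resolution of identity at the level of quadratic forms
  have key : ∀ Φ : 𝓗, HasSum (fun x => (inner ℂ Φ (P x Φ) : ℂ).re) (‖Φ‖ ^ 2) := by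
    intro Φ
    have h1 : HasSum (fun x => (inner ℂ Φ (P x Φ) : ℂ)) (inner ℂ Φ Φ) :=
      (innerSL ℂ Φ).hasSum (hP_sum Φ)
    have h2 := Complex.reCLM.hasSum h1
    have h4 : (inner ℂ Φ Φ : ℂ).re = ‖Φ‖ ^ 2 := by
      simpa using inner_self_eq_norm_sq (𝕜 := ℂ) Φ
    rw [← h4]
    simpa using h2
  have key_le : ∀ (Φ : 𝓗) (s : Finset E), ∑ x ∈ s, (inner ℂ Φ (P x Φ) : ℂ).re ≤ ‖Φ‖ ^ 2 := by
    intro Φ s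
    have := Summable.sum_le_tsum s (fun i _ => hP_pos i Φ) (key Φ).summable
    rwa [(key Φ).tsum_eq] at this
  -- Parseval
  have par : ∀ Φ : 𝓗, HasSum (fun n => ‖(inner ℂ (e n) Φ : ℂ)‖ ^ 2) (‖Φ‖ ^ 2) := by
    intro Φ
    have h1 := e.hasSum_inner_mul_inner Φ Φ
    have h2 := Complex.reCLM.hasSum h1
    have h3 : ∀ n : ℕ, (((inner ℂ Φ (e n) : ℂ)) * ((inner ℂ (e n) Φ : ℂ))).re
        = ‖(inner ℂ (e n) Φ : ℂ)‖ ^ 2 := by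
      intro n
      rw [← inner_conj_symm (e n) Φ, RCLike.mul_conj, RCLike.norm_conj]
      norm_cast
    have h4 : ((inner ℂ Φ Φ : ℂ)).re = ‖Φ‖ ^ 2 := by
      simpa using inner_self_eq_norm_sq (𝕜 := ℂ) Φ
    have h5 : HasSum (fun n => (((inner ℂ Φ (e n) : ℂ)) * ((inner ℂ (e n) Φ : ℂ))).re)
        ((inner ℂ Φ Φ : ℂ)).re := h2
    rw [h4] at h5
    simpa only [h3] using h5
  set p : E → ℝ := fun x => (inner ℂ Ψ (P x Ψ) : ℂ).re with hp
  set r : ℕ → E → ℝ := fun n y => (inner ℂ (H (e n)) (P y (H (e n))) : ℂ).re with hr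
  set R : E → ℝ := fun y => ∑' n, r n y with hR
  have hr_nonneg : ∀ n y, 0 ≤ r n y := fun n y => hP_pos y (H (e n))
  have hr_bound : ∀ y n, r n y ≤ ‖P y‖ * ‖H (e n)‖ ^ 2 := by
    intro y n
    calc r n y ≤ ‖(inner ℂ (H (e n)) (P y (H (e n))) : ℂ)‖ := Complex.re_le_norm _
      _ ≤ ‖H (e n)‖ * ‖P y (H (e n))‖ := norm_inner_le_norm _ _
      _ ≤ ‖H (e n)‖ * (‖P y‖ * ‖H (e n)‖) := by
          exact mul_le_mul_of_nonneg_left ((P y).le_opNorm _) (norm_nonneg _)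
      _ = ‖P y‖ * ‖H (e n)‖ ^ 2 := by ring
  have hr_summ : ∀ y, Summable fun n => r n y := fun y =>
    Summable.of_nonneg_of_le (fun n => hr_nonneg n y) (hr_bound y) (hHS.mul_left _)
  have hR_nonneg : ∀ y, 0 ≤ R y := fun y => tsum_nonneg (fun n => hr_nonneg n y)
  have hp_nonneg : ∀ x, 0 ≤ p x := fun x => hP_pos x Ψ
  -- step 2 : ‖H (P y Ψ)‖ ≤ √(R y) * √(p y)
  have step2 : ∀ y, ‖H (P y Ψ)‖ ≤ Real.sqrt (R y) * Real.sqrt (p y) := by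
    intro y
    have hsq : ‖H (P y Ψ)‖ ^ 2 ≤ R y * p y := by
      have hpar := par (H (P y Ψ))
      have heq : ∀ n : ℕ, ‖(inner ℂ (e n) (H (P y Ψ)) : ℂ)‖ ^ 2
          = ‖(inner ℂ (H (e n)) (P y Ψ) : ℂ)‖ ^ 2 := by
        intro n
        exact congrArg (fun z : ℂ => ‖z‖ ^ 2) (hH.isSymmetric (e n) (P y Ψ)).symm
      have hterm : ∀ n : ℕ, ‖(inner ℂ (H (e n)) (P y Ψ) : ℂ)‖ ^ 2 ≤ r n y * p y :=
        fun n => cs_pos_sq (P y) (hP_sa y) (hP_pos y) (H (e n)) Ψ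
      have hsum1 : Summable fun n => ‖(inner ℂ (H (e n)) (P y Ψ) : ℂ)‖ ^ 2 := by
        have := hpar.summable
        simpa only [heq] using this
      have hsum2 : Summable fun n => r n y * p y := (hr_summ y).mul_right _
      have h5 : ‖H (P y Ψ)‖ ^ 2 = ∑' n, ‖(inner ℂ (H (e n)) (P y Ψ) : ℂ)‖ ^ 2 := by
        rw [← hpar.tsum_eq]
        exact tsum_congr heq
      rw [h5]
      calc (∑' n, ‖(inner ℂ (H (e n)) (P y Ψ) : ℂ)‖ ^ 2) ≤ ∑' n, r n y * p y :=
            Summable.tsum_le_tsum hterm hsum1 hsum2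
        _ = R y * p y := by rw [hR]; exact tsum_mul_right
    calc ‖H (P y Ψ)‖ = Real.sqrt (‖H (P y Ψ)‖ ^ 2) := (Real.sqrt_sq (norm_nonneg _)).symm
      _ ≤ Real.sqrt (R y * p y) := Real.sqrt_le_sqrt hsq
      _ = Real.sqrt (R y) * Real.sqrt (p y) := Real.sqrt_mul (hR_nonneg y) _
  -- step 3 : ∑_{y ∈ Y} R y ≤ T
  have step3 : ∀ Y : Finset E, ∑ y ∈ Y, R y ≤ T := by
    intro Y
    have hswap : ∑ y ∈ Y, R y = ∑' n, ∑ y ∈ Y, r n y := by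
      rw [hR]
      exact (Summable.tsum_finsetSum (fun y _ => hr_summ y)).symm
    have hb : ∀ n : ℕ, ∑ y ∈ Y, r n y ≤ ‖H (e n)‖ ^ 2 := fun n => key_le (H (e n)) Y
    rw [hswap, hT]
    refine Summable.tsum_le_tsum hb ?_ hHS
    exact Summable.of_nonneg_of_le
      (fun n => Finset.sum_nonneg fun y _ => hr_nonneg n y) hb hHS
  -- step 1 : for fixed y, ∑_{x ∈ X} t (x, y) ≤ ‖Ψ‖ * ‖H (P y Ψ)‖
  have step1 : ∀ (y : E) (X : Finset E), ∑ x ∈ X, t (x, y) ≤ ‖Ψ‖ * ‖H (P y Ψ)‖ := by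
    intro y X
    set g : E → ℝ := fun x => (inner ℂ (H (P y Ψ)) (P x (H (P y Ψ))) : ℂ).re with hg
    have hg_nonneg : ∀ x, 0 ≤ g x := fun x => hP_pos x _
    calc ∑ x ∈ X, t (x, y) ≤ ∑ x ∈ X, Real.sqrt (p x) * Real.sqrt (g x) := by
          refine Finset.sum_le_sum fun x _ => ?_
          exact cs_pos_sqrt (P x) (hP_sa x) (hP_pos x) Ψ (H (P y Ψ))
      _ ≤ Real.sqrt (∑ x ∈ X, p x) * Real.sqrt (∑ x ∈ X, g x) :=
          Real.sum_sqrt_mul_sqrt_le X hp_nonneg hg_nonneg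
      _ ≤ Real.sqrt (‖Ψ‖ ^ 2) * Real.sqrt (‖H (P y Ψ)‖ ^ 2) := by
          refine mul_le_mul (Real.sqrt_le_sqrt (key_le Ψ X))
            (Real.sqrt_le_sqrt (key_le (H (P y Ψ)) X)) (Real.sqrt_nonneg _)
            (Real.sqrt_nonneg _)
      _ = ‖Ψ‖ * ‖H (P y Ψ)‖ := by
          rw [Real.sqrt_sq (norm_nonneg _), Real.sqrt_sq (norm_nonneg _)]
  -- main finset bound
  have main : ∀ F : Finset (E × E), ∑ q ∈ F, t q ≤ ‖Ψ‖ ^ 2 * Real.sqrt T := by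
    intro F
    classical
    set X : Finset E := F.image Prod.fst with hX
    set Y : Finset E := F.image Prod.snd with hY
    have hFsub : F ⊆ X ×ˢ Y := by
      intro q hq
      exact Finset.mem_product.2
        ⟨Finset.mem_image_of_mem Prod.fst hq, Finset.mem_image_of_mem Prod.snd hq⟩
    calc ∑ q ∈ F, t q ≤ ∑ q ∈ X ×ˢ Y, t q :=
          Finset.sum_le_sum_of_subset_of_nonneg hFsub (fun _ _ _ => norm_nonneg _)
      _ = ∑ y ∈ Y, ∑ x ∈ X, t (x, y) := by
          rw [Finset.sum_product]
          exact Finset.sum_comm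
      _ ≤ ∑ y ∈ Y, ‖Ψ‖ * ‖H (P y Ψ)‖ := Finset.sum_le_sum fun y _ => step1 y X
      _ ≤ ∑ y ∈ Y, ‖Ψ‖ * (Real.sqrt (R y) * Real.sqrt (p y)) := by
          refine Finset.sum_le_sum fun y _ => ?_
          exact mul_le_mul_of_nonneg_left (step2 y) (norm_nonneg Ψ)
      _ = ‖Ψ‖ * ∑ y ∈ Y, Real.sqrt (R y) * Real.sqrt (p y) := by rw [Finset.mul_sum]
      _ ≤ ‖Ψ‖ * (Real.sqrt (∑ y ∈ Y, R y) * Real.sqrt (∑ y ∈ Y, p y)) := by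
          refine mul_le_mul_of_nonneg_left ?_ (norm_nonneg Ψ)
          exact Real.sum_sqrt_mul_sqrt_le Y hR_nonneg hp_nonneg
      _ ≤ ‖Ψ‖ * (Real.sqrt T * Real.sqrt (‖Ψ‖ ^ 2)) := by
          refine mul_le_mul_of_nonneg_left ?_ (norm_nonneg Ψ)
          exact mul_le_mul (Real.sqrt_le_sqrt (step3 Y)) (Real.sqrt_le_sqrt (key_le Ψ Y))
            (Real.sqrt_nonneg _) (Real.sqrt_nonneg _)
      _ = ‖Ψ‖ ^ 2 * Real.sqrt T := by
          rw [Real.sqrt_sq (norm_nonneg _)]; ring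
  have hsummable : Summable t := summable_of_sum_le (fun q => norm_nonneg _) main
  exact ⟨hsummable, Summable.tsum_le_of_sum_le hsummable main⟩
end

section
/- Suppose H is a self-adjoint Hilbert–Schmidt operator with tr H² = ∑_n ‖H e_n‖² < ∞. Then Assumption (A2) holds for every Ψ₀ ∈ 𝓗: for all t ∈ ℝ, ∑_{x,y∈E} |⟪Ψ_t, P(y) H P(x) Ψ_t⟫| ≤ ‖Ψ₀‖² √(tr H²), and hence for all real t₀ < t₁, ∫_{t₀}^{t₁} ∑_{x,y∈E} |⟪Ψ_t, P(y) H P(x) Ψ_t⟫| dt ≤ (t₁ − t₀) ‖Ψ₀‖² √(tr H²) < ∞. -/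
open MeasureTheory
open scoped ENNReal

section BellA2Aux

variable {𝓗 : Type*} [NormedAddCommGroup 𝓗] [InnerProductSpace ℂ 𝓗] [CompleteSpace 𝓗]

local notation "⟪" x ", " y "⟫" => (inner ℂ x y : ℂ)

/-- Cauchy–Schwarz for a positive selfadjoint operator. -/
lemma bellA2_cs (T : 𝓗 →L[ℂ] 𝓗) (hsa : IsSelfAdjoint T)
    (hpos : ∀ φ : 𝓗, 0 ≤ (⟪φ, T φ⟫).re) (x y : 𝓗) :
    ‖⟪x, T y⟫‖ ≤ Real.sqrt (⟪x, T x⟫).re * Real.sqrt (⟪y, T y⟫).re := by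
  have hsymm := ContinuousLinearMap.isSelfAdjoint_iff_isSymmetric.mp hsa
  have hsymm' : ∀ a b : 𝓗, (inner ℂ (T a) b : ℂ) = inner ℂ a (T b) := fun a b => hsymm a b
  let c : PreInnerProductSpace.Core ℂ 𝓗 :=
  { inner := fun a b => ⟪a, T b⟫
    conj_inner_symm := fun a b => by
      show (starRingEnd ℂ) (inner ℂ b (T a) : ℂ) = (inner ℂ a (T b) : ℂ)
      exact (inner_conj_symm (T a) b).trans (hsymm' a b)
    re_inner_nonneg := hpos
    add_left := fun a b z => by simp [inner_add_left]
    smul_left := fun a b r => by simp [inner_smul_left, mul_comm] }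
  have h : ‖⟪x, T y⟫‖ * ‖⟪y, T x⟫‖ ≤ (⟪x, T x⟫).re * (⟪y, T y⟫).re :=
    @InnerProductSpace.Core.inner_mul_inner_self_le ℂ 𝓗 _ _ _ c x y
  have hxy : ‖⟪y, T x⟫‖ = ‖⟪x, T y⟫‖ := by
    rw [← inner_conj_symm, hsymm' x y, RCLike.norm_conj]
  have h2 : ‖⟪x, T y⟫‖ ^ 2 ≤ (⟪x, T x⟫).re * (⟪y, T y⟫).re := by
    have : ‖⟪x, T y⟫‖ * ‖⟪y, T x⟫‖ ≤ (⟪x, T x⟫).re * (⟪y, T y⟫).re := h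
    rw [hxy] at this
    nlinarith [norm_nonneg (⟪x, T y⟫)]
  calc ‖⟪x, T y⟫‖ = Real.sqrt (‖⟪x, T y⟫‖ ^ 2) := (Real.sqrt_sq (norm_nonneg _)).symm
    _ ≤ Real.sqrt ((⟪x, T x⟫).re * (⟪y, T y⟫).re) := Real.sqrt_le_sqrt h2
    _ = Real.sqrt (⟪x, T x⟫).re * Real.sqrt (⟪y, T y⟫).re := Real.sqrt_mul (hpos x) _

/-- Sum of the diagonal matrix elements of a POVM. -/
lemma bellA2_hasSum {E : Type*} (P : E → 𝓗 →L[ℂ] 𝓗)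
    (hP_sum : ∀ Φ : 𝓗, HasSum (fun x => P x Φ) Φ) (Φ : 𝓗) :
    HasSum (fun x => (⟪Φ, P x Φ⟫).re) (‖Φ‖ ^ 2) := by
  have h1 : HasSum (fun x => ⟪Φ, P x Φ⟫) ⟪Φ, Φ⟫ := (innerSL ℂ Φ).hasSum (hP_sum Φ)
  have h2 := Complex.reCLM.hasSum h1
  have h3 : (⟪Φ, Φ⟫).re = ‖Φ‖ ^ 2 := by
    rw [← inner_self_eq_norm_sq (𝕜 := ℂ)]; rfl
  exact h3 ▸ h2

/-- Cauchy–Schwarz for tsums of square roots. -/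
lemma bellA2_tsum_sqrt {ι : Type*} {a b : ι → ℝ} (ha : ∀ i, 0 ≤ a i) (hb : ∀ i, 0 ≤ b i)
    (hsa : Summable a) (hsb : Summable b) :
    Summable (fun i => Real.sqrt (a i) * Real.sqrt (b i)) ∧
      ∑' i, Real.sqrt (a i) * Real.sqrt (b i) ≤
        Real.sqrt (∑' i, a i) * Real.sqrt (∑' i, b i) := by
  have hsumm : Summable (fun i => Real.sqrt (a i) * Real.sqrt (b i)) := by
    refine Summable.of_nonneg_of_le (fun i => by positivity) (fun i => ?_)
      ((hsa.add hsb).div_const 2)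
    have h1 := Real.sq_sqrt (ha i)
    have h2 := Real.sq_sqrt (hb i)
    nlinarith [sq_nonneg (Real.sqrt (a i) - Real.sqrt (b i))]
  refine ⟨hsumm, hsumm.tsum_le_of_sum_le (fun s => ?_)⟩
  refine (Real.sum_sqrt_mul_sqrt_le s ha hb).trans ?_
  exact mul_le_mul (Real.sqrt_le_sqrt (hsa.sum_le_tsum s (fun i _ => ha i)))
    (Real.sqrt_le_sqrt (hsb.sum_le_tsum s (fun i _ => hb i)))
    (Real.sqrt_nonneg _) (Real.sqrt_nonneg _)

/-- The basic row bound `∑_y |⟪Φ, P y φ⟫| ≤ ‖Φ‖ ‖φ‖`. -/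
lemma bellA2_row {E : Type*} (P : E → 𝓗 →L[ℂ] 𝓗)
    (hP_sa : ∀ x, IsSelfAdjoint (P x))
    (hP_pos : ∀ x (Φ : 𝓗), 0 ≤ (⟪Φ, P x Φ⟫).re)
    (hP_sum : ∀ Φ : 𝓗, HasSum (fun x => P x Φ) Φ) (Φ φ : 𝓗) :
    Summable (fun y => ‖⟪Φ, P y φ⟫‖) ∧ ∑' y, ‖⟪Φ, P y φ⟫‖ ≤ ‖Φ‖ * ‖φ‖ := by
  set a : E → ℝ := fun y => (⟪Φ, P y Φ⟫).re with ha_def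
  set b : E → ℝ := fun y => (⟪φ, P y φ⟫).re with hb_def
  have hsa := bellA2_hasSum P hP_sum Φ
  have hsb := bellA2_hasSum P hP_sum φ
  have hle : ∀ y, ‖⟪Φ, P y φ⟫‖ ≤ Real.sqrt (a y) * Real.sqrt (b y) := fun y =>
    bellA2_cs (P y) (hP_sa y) (fun ψ => hP_pos y ψ) Φ φ
  obtain ⟨hsumm, hts⟩ := bellA2_tsum_sqrt (fun y => hP_pos y Φ) (fun y => hP_pos y φ)
    hsa.summable hsb.summable
  have hsumm' : Summable (fun y => ‖⟪Φ, P y φ⟫‖) :=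
    Summable.of_nonneg_of_le (fun y => norm_nonneg _) hle hsumm
  refine ⟨hsumm', ?_⟩
  calc ∑' y, ‖⟪Φ, P y φ⟫‖ ≤ ∑' y, Real.sqrt (a y) * Real.sqrt (b y) :=
        hsumm'.tsum_le_tsum hle hsumm
    _ ≤ Real.sqrt (∑' y, a y) * Real.sqrt (∑' y, b y) := hts
    _ = ‖Φ‖ * ‖φ‖ := by
        rw [hsa.tsum_eq, hsb.tsum_eq, Real.sqrt_sq (norm_nonneg _), Real.sqrt_sq (norm_nonneg _)]

/-- Norm preservation under the unitary evolution. -/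
lemma bellA2_norm_exp (H : 𝓗 →L[ℂ] 𝓗) (hH : IsSelfAdjoint H) (t : ℝ) (Ψ₀ : 𝓗) :
    ‖NormedSpace.exp ((-(Complex.I * (t : ℂ)) / 2) • H) Ψ₀‖ = ‖Ψ₀‖ := by
  set c : ℂ := -(Complex.I * (t : ℂ)) / 2 with hc
  have hskew : c • H ∈ skewAdjoint (𝓗 →L[ℂ] 𝓗) := by
    rw [skewAdjoint.mem_iff, star_smul, hH.star_eq, ← neg_smul]
    congr 1
    simp only [hc, starRingEnd_apply]
    rw [star_div₀, star_neg, star_mul']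
    simp [Complex.star_def, Complex.conj_I, Complex.conj_ofReal]
    ring
  let +nondep : NormedAlgebra ℚ (𝓗 →L[ℂ] 𝓗) := .restrictScalars ℚ ℂ (𝓗 →L[ℂ] 𝓗)
  have hu := NormedSpace.exp_mem_unitary_of_mem_skewAdjoint hskew
  set U : 𝓗 →L[ℂ] 𝓗 := NormedSpace.exp (c • H) with hU
  have h1 : star U * U = 1 := (Unitary.mem_iff.mp hu).1
  have h3 : (ContinuousLinearMap.adjoint U) (U Ψ₀) = Ψ₀ := by
    rw [← ContinuousLinearMap.star_eq_adjoint]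
    have : (star U * U) Ψ₀ = (1 : 𝓗 →L[ℂ] 𝓗) Ψ₀ := by rw [h1]
    simpa using this
  have h2 : ⟪U Ψ₀, U Ψ₀⟫ = ⟪Ψ₀, Ψ₀⟫ := by
    rw [← ContinuousLinearMap.adjoint_inner_right U, h3]
  have hre := congrArg Complex.re h2
  have e1 : (⟪U Ψ₀, U Ψ₀⟫).re = ‖U Ψ₀‖ ^ 2 := by
    rw [← inner_self_eq_norm_sq (𝕜 := ℂ)]; rfl
  have e2 : (⟪Ψ₀, Ψ₀⟫).re = ‖Ψ₀‖ ^ 2 := by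
    rw [← inner_self_eq_norm_sq (𝕜 := ℂ)]; rfl
  rw [e1, e2] at hre
  nlinarith [norm_nonneg (U Ψ₀), norm_nonneg Ψ₀]

end BellA2Aux

/-- If `H` is a self-adjoint Hilbert–Schmidt operator, then
Assumption (A2) holds for every `Ψ₀`: for all `t`,
`∑_{x,y∈E} |⟪Ψ_t, P(y) H P(x) Ψ_t⟫| ≤ ‖Ψ₀‖² √(tr H²)`, and hence for `t₀ < t₁`,
`∫_{t₀}^{t₁} ∑_{x,y∈E} |⟪Ψ_t, P(y) H P(x) Ψ_t⟫| dt ≤ (t₁−t₀) ‖Ψ₀‖² √(tr H²) < ∞`. -/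
theorem bell_A2_of_hilbertSchmidt
    {𝓗 : Type*} [NormedAddCommGroup 𝓗] [InnerProductSpace ℂ 𝓗] [CompleteSpace 𝓗]
    (e : HilbertBasis ℕ ℂ 𝓗)
    {E : Type*} [Countable E]
    (P : E → 𝓗 →L[ℂ] 𝓗)
    (hP_sa : ∀ x, IsSelfAdjoint (P x))
    (hP_pos : ∀ x (Φ : 𝓗), 0 ≤ (inner ℂ Φ (P x Φ) : ℂ).re)
    (hP_sum : ∀ Φ : 𝓗, HasSum (fun x => P x Φ) Φ)
    (H : 𝓗 →L[ℂ] 𝓗) (hH : IsSelfAdjoint H)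
    (hHS : Summable fun n => ‖H (e n)‖ ^ 2)
    (Ψ₀ : 𝓗) (Ψ : ℝ → 𝓗)
    (hΨ : ∀ t : ℝ, Ψ t = NormedSpace.exp ((-(Complex.I * (t : ℂ)) / 2) • H) Ψ₀) :
    (∀ t : ℝ,
      Summable (fun p : E × E => ‖(inner ℂ (Ψ t) (P p.1 (H (P p.2 (Ψ t)))) : ℂ)‖) ∧
      ∑' p : E × E, ‖(inner ℂ (Ψ t) (P p.1 (H (P p.2 (Ψ t)))) : ℂ)‖ ≤
        ‖Ψ₀‖ ^ 2 * Real.sqrt (∑' n, ‖H (e n)‖ ^ 2)) ∧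
    ∀ t₀ t₁ : ℝ, t₀ < t₁ →
      ∫⁻ t in Set.Ioc t₀ t₁,
          ENNReal.ofReal
            (∑' p : E × E, ‖(inner ℂ (Ψ t) (P p.1 (H (P p.2 (Ψ t)))) : ℂ)‖) ≤
        ENNReal.ofReal
          ((t₁ - t₀) * (‖Ψ₀‖ ^ 2 * Real.sqrt (∑' n, ‖H (e n)‖ ^ 2))) := by
  set tr : ℝ := ∑' n, ‖H (e n)‖ ^ 2 with htr
  have htr_nonneg : 0 ≤ tr := tsum_nonneg (fun n => sq_nonneg _)
  have hnorm : ∀ t, ‖Ψ t‖ = ‖Ψ₀‖ := fun t => by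
    rw [hΨ t]; exact bellA2_norm_exp H hH t Ψ₀
  have hHsymm : ∀ u v : 𝓗, (inner ℂ (H u) v : ℂ) = inner ℂ u (H v) := fun u v =>
    (ContinuousLinearMap.isSelfAdjoint_iff_isSymmetric.mp hH) u v
  have hmain : ∀ t : ℝ,
      Summable (fun p : E × E => ‖(inner ℂ (Ψ t) (P p.1 (H (P p.2 (Ψ t)))) : ℂ)‖) ∧
      ∑' p : E × E, ‖(inner ℂ (Ψ t) (P p.1 (H (P p.2 (Ψ t)))) : ℂ)‖ ≤
        ‖Ψ₀‖ ^ 2 * Real.sqrt tr := by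
    intro t
    set ψ : 𝓗 := Ψ t with hψdef
    have hψsum := bellA2_hasSum P hP_sum ψ
    set a : E → ℝ := fun x => (inner ℂ ψ (P x ψ) : ℂ).re with ha
    have ha_nonneg : ∀ x, 0 ≤ a x := fun x => hP_pos x ψ
    set f : E → ℕ → ℝ := fun x n => (inner ℂ (H (e n)) (P x (H (e n))) : ℂ).re with hf
    have hf_nonneg : ∀ x n, 0 ≤ f x n := fun x n => hP_pos x _
    have hfsum : ∀ n, HasSum (fun x => f x n) (‖H (e n)‖ ^ 2) := fun n =>
      bellA2_hasSum P hP_sum _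
    have hf_summable : ∀ x, Summable (f x) := by
      intro x
      refine Summable.of_nonneg_of_le (hf_nonneg x) (fun n => ?_) (hHS.mul_left ‖P x‖)
      calc f x n ≤ ‖(inner ℂ (H (e n)) (P x (H (e n))) : ℂ)‖ := Complex.re_le_norm _
        _ ≤ ‖H (e n)‖ * ‖P x (H (e n))‖ := norm_inner_le_norm _ _
        _ ≤ ‖H (e n)‖ * (‖P x‖ * ‖H (e n)‖) :=
            mul_le_mul_of_nonneg_left ((P x).le_opNorm _) (norm_nonneg _)
        _ = ‖P x‖ * ‖H (e n)‖ ^ 2 := by ring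
    set r : E → ℝ := fun x => ∑' n, f x n with hr
    have hr_nonneg : ∀ x, 0 ≤ r x := fun x => tsum_nonneg (hf_nonneg x)
    have hr_bound : ∀ s : Finset E, ∑ x ∈ s, r x ≤ tr := by
      intro s
      have h1 : ∑ x ∈ s, r x = ∑' n, ∑ x ∈ s, f x n :=
        (Summable.tsum_finsetSum (fun i _ => hf_summable i)).symm
      rw [h1, htr]
      refine Summable.tsum_le_tsum (fun n => ?_) (summable_sum (fun i _ => hf_summable i)) hHS
      exact sum_le_hasSum s (fun x _ => hf_nonneg x n) (hfsum n)
    have hr_summable : Summable r := summable_of_sum_le (fun x => hr_nonneg x) hr_bound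
    have hr_tsum : ∑' x, r x ≤ tr := hr_summable.tsum_le_of_sum_le hr_bound
    -- ‖H (P x ψ)‖ ≤ √(r x) * √(a x)
    have hHP : ∀ x, ‖H (P x ψ)‖ ≤ Real.sqrt (r x) * Real.sqrt (a x) := by
      intro x
      have hpar : HasSum (fun n => ‖(inner ℂ (H (e n)) (P x ψ) : ℂ)‖ ^ 2)
          (‖H (P x ψ)‖ ^ 2) := by
        have h1 := e.hasSum_inner_mul_inner (H (P x ψ)) (H (P x ψ))
        have h2 := Complex.reCLM.hasSum h1
        have e3 : (inner ℂ (H (P x ψ)) (H (P x ψ)) : ℂ).re = ‖H (P x ψ)‖ ^ 2 := by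
          rw [← inner_self_eq_norm_sq (𝕜 := ℂ)]; rfl
        rw [show Complex.reCLM (inner ℂ (H (P x ψ)) (H (P x ψ)) : ℂ)
            = ‖H (P x ψ)‖ ^ 2 from e3] at h2
        refine HasSum.congr_fun h2 (fun n => ?_)
        have hgoal : Complex.reCLM ((inner ℂ (H (P x ψ)) (e n) : ℂ) *
            (inner ℂ (e n) (H (P x ψ)) : ℂ)) = ‖(inner ℂ (H (e n)) (P x ψ) : ℂ)‖ ^ 2 := by
          rw [show (inner ℂ (H (P x ψ)) (e n) : ℂ)
                = (starRingEnd ℂ) (inner ℂ (e n) (H (P x ψ)) : ℂ) from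
              (inner_conj_symm _ _).symm]
          rw [← hHsymm (e n) (P x ψ)]
          show ((starRingEnd ℂ) _ * _).re = _
          rw [Complex.mul_re]
          simp only [Complex.conj_re, Complex.conj_im, Complex.sq_norm,
            Complex.normSq_apply]
          ring
        exact hgoal.symm
      have hterm : ∀ n, ‖(inner ℂ (H (e n)) (P x ψ) : ℂ)‖ ^ 2 ≤ f x n * a x := by
        intro n
        have h := bellA2_cs (P x) (hP_sa x) (fun φ => hP_pos x φ) (H (e n)) ψ
        calc ‖(inner ℂ (H (e n)) (P x ψ) : ℂ)‖ ^ 2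
            ≤ (Real.sqrt (f x n) * Real.sqrt (a x)) ^ 2 := by
              have h0 : (0:ℝ) ≤ Real.sqrt (f x n) * Real.sqrt (a x) := by positivity
              exact pow_le_pow_left₀ (norm_nonneg _) h 2
          _ = f x n * a x := by
              rw [mul_pow, Real.sq_sqrt (hf_nonneg x n), Real.sq_sqrt (ha_nonneg x)]
      have hsq : ‖H (P x ψ)‖ ^ 2 ≤ r x * a x := by
        have := Summable.tsum_le_tsum hterm hpar.summable ((hf_summable x).mul_right (a x))
        rw [hpar.tsum_eq, tsum_mul_right] at this
        exact this
      calc ‖H (P x ψ)‖ = Real.sqrt (‖H (P x ψ)‖ ^ 2) := (Real.sqrt_sq (norm_nonneg _)).symm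
        _ ≤ Real.sqrt (r x * a x) := Real.sqrt_le_sqrt hsq
        _ = Real.sqrt (r x) * Real.sqrt (a x) := Real.sqrt_mul (hr_nonneg x) _
    have key : ∀ x : E, Summable (fun y => ‖(inner ℂ ψ (P y (H (P x ψ))) : ℂ)‖) ∧
        ∑' y, ‖(inner ℂ ψ (P y (H (P x ψ))) : ℂ)‖ ≤ ‖ψ‖ * ‖H (P x ψ)‖ := fun x =>
      bellA2_row P hP_sa hP_pos hP_sum ψ (H (P x ψ))
    have hub : ∀ x, ∑' y, ‖(inner ℂ ψ (P y (H (P x ψ))) : ℂ)‖ ≤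
        ‖ψ‖ * (Real.sqrt (r x) * Real.sqrt (a x)) := fun x =>
      (key x).2.trans (mul_le_mul_of_nonneg_left (hHP x) (norm_nonneg ψ))
    obtain ⟨hsq_summ, hsq_le⟩ :=
      bellA2_tsum_sqrt hr_nonneg ha_nonneg hr_summable hψsum.summable
    have husum : Summable (fun x => ∑' y, ‖(inner ℂ ψ (P y (H (P x ψ))) : ℂ)‖) :=
      Summable.of_nonneg_of_le (fun x => tsum_nonneg (fun y => norm_nonneg _)) hub
        (hsq_summ.mul_left ‖ψ‖)
    have hg : Summable (fun q : E × E => ‖(inner ℂ ψ (P q.2 (H (P q.1 ψ))) : ℂ)‖) :=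
      (summable_prod_of_nonneg (fun q => norm_nonneg _)).mpr ⟨fun x => (key x).1, husum⟩
    have htarget : Summable (fun p : E × E => ‖(inner ℂ ψ (P p.1 (H (P p.2 ψ))) : ℂ)‖) :=
      ((Equiv.prodComm E E).summable_iff).mpr hg
    refine ⟨htarget, ?_⟩
    calc ∑' p : E × E, ‖(inner ℂ ψ (P p.1 (H (P p.2 ψ))) : ℂ)‖
        = ∑' q : E × E, ‖(inner ℂ ψ (P q.2 (H (P q.1 ψ))) : ℂ)‖ :=
          (Equiv.prodComm E E).tsum_eq (fun q : E × E => ‖(inner ℂ ψ (P q.2 (H (P q.1 ψ))) : ℂ)‖)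
      _ = ∑' x, ∑' y, ‖(inner ℂ ψ (P y (H (P x ψ))) : ℂ)‖ :=
          hg.tsum_prod' (fun x => (key x).1)
      _ ≤ ∑' x, ‖ψ‖ * (Real.sqrt (r x) * Real.sqrt (a x)) :=
          Summable.tsum_le_tsum hub husum (hsq_summ.mul_left ‖ψ‖)
      _ = ‖ψ‖ * ∑' x, Real.sqrt (r x) * Real.sqrt (a x) := tsum_mul_left
      _ ≤ ‖ψ‖ * (Real.sqrt (∑' x, r x) * Real.sqrt (∑' x, a x)) :=
          mul_le_mul_of_nonneg_left hsq_le (norm_nonneg ψ)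
      _ ≤ ‖ψ‖ * (Real.sqrt tr * ‖ψ‖) := by
          have h1 : Real.sqrt (∑' x, r x) ≤ Real.sqrt tr := Real.sqrt_le_sqrt hr_tsum
          have h2 : Real.sqrt (∑' x, a x) = ‖ψ‖ := by
            rw [hψsum.tsum_eq, Real.sqrt_sq (norm_nonneg ψ)]
          rw [h2]
          exact mul_le_mul_of_nonneg_left
            (mul_le_mul_of_nonneg_right h1 (norm_nonneg ψ)) (norm_nonneg ψ)
      _ = ‖ψ‖ ^ 2 * Real.sqrt tr := by ring
      _ = ‖Ψ₀‖ ^ 2 * Real.sqrt tr := by rw [hψdef, hnorm t]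
  refine ⟨hmain, ?_⟩
  intro t₀ t₁ h01
  have hC : 0 ≤ ‖Ψ₀‖ ^ 2 * Real.sqrt tr := by positivity
  calc ∫⁻ t in Set.Ioc t₀ t₁,
        ENNReal.ofReal (∑' p : E × E, ‖(inner ℂ (Ψ t) (P p.1 (H (P p.2 (Ψ t)))) : ℂ)‖)
      ≤ ∫⁻ _ in Set.Ioc t₀ t₁, ENNReal.ofReal (‖Ψ₀‖ ^ 2 * Real.sqrt tr) :=
        lintegral_mono (fun t => ENNReal.ofReal_le_ofReal ((hmain t).2))
    _ = ENNReal.ofReal (‖Ψ₀‖ ^ 2 * Real.sqrt tr) * volume (Set.Ioc t₀ t₁) :=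
        setLIntegral_const _ _
    _ = ENNReal.ofReal (‖Ψ₀‖ ^ 2 * Real.sqrt tr) * ENNReal.ofReal (t₁ - t₀) := by
        rw [Real.volume_Ioc]
    _ = ENNReal.ofReal (t₁ - t₀) * ENNReal.ofReal (‖Ψ₀‖ ^ 2 * Real.sqrt tr) := mul_comm _ _
    _ = ENNReal.ofReal ((t₁ - t₀) * (‖Ψ₀‖ ^ 2 * Real.sqrt tr)) :=
        (ENNReal.ofReal_mul' hC).symm
end

section
/- Let (P(x))_{x∈E} be a family of bounded positive self-adjoint operators on 𝓗 indexed by a countable set E that is weakly countably additive with total sum the identity: for all Φ, Ψ ∈ 𝓗 the family (⟪Ψ, P(x)Φ⟫)_{x∈E} is summable with sum ⟪Ψ, Φ⟫. Then the countable additivity also holds in the strong topology: for every Φ ∈ 𝓗 the family (P(x)Φ)_{x∈E} is (unconditionally) summable in the norm of 𝓗 with sum Φ. -/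
open scoped InnerProductSpace

/-- Weak countable additivity implies strong countable
additivity: if `(P(x))_{x∈E}` are bounded positive self-adjoint operators such
that for all `Φ, Ψ ∈ 𝓗` the family `(⟪Ψ, P(x)Φ⟫)_{x∈E}` is summable with sum
`⟪Ψ, Φ⟫`, then for every `Φ ∈ 𝓗` the family `(P(x)Φ)_{x∈E}` is unconditionally
summable in norm with sum `Φ`. -/
theorem povm_weak_to_strong_additivity
    {𝓗 : Type*} [NormedAddCommGroup 𝓗] [InnerProductSpace ℂ 𝓗] [CompleteSpace 𝓗]
    {E : Type*} [Countable E]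
    (P : E → 𝓗 →L[ℂ] 𝓗)
    (hP_sa : ∀ x, IsSelfAdjoint (P x))
    (hP_pos : ∀ x (Φ : 𝓗), 0 ≤ (inner ℂ Φ (P x Φ) : ℂ).re)
    (hP_weak : ∀ Φ Ψ : 𝓗,
      HasSum (fun x => (inner ℂ Ψ (P x Φ) : ℂ)) (inner ℂ Ψ Φ)) :
    ∀ Φ : 𝓗, HasSum (fun x => P x Φ) Φ := by
  intro Φ
  have hsym : ∀ x, (P x : 𝓗 →ₗ[ℂ] 𝓗).IsSymmetric := fun x =>
    (ContinuousLinearMap.isSelfAdjoint_iff_isSymmetric).mp (hP_sa x)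
  -- Cauchy–Schwarz for the positive sesquilinear form of each `P x`
  have hcs : ∀ (x : E) (u v : 𝓗),
      ‖(inner ℂ u (P x v) : ℂ)‖ ^ 2 ≤
        (inner ℂ u (P x u) : ℂ).re * (inner ℂ v (P x v) : ℂ).re := by
    intro x u v
    letI c : PreInnerProductSpace.Core ℂ 𝓗 :=
      { inner := fun a b => inner ℂ a (P x b)
        conj_inner_symm := fun a b => (inner_conj_symm ((P x) a) b).trans (hsym x a b)
        re_inner_nonneg := fun a => hP_pos x a
        add_left := fun a b z => inner_add_left a b (P x z)
        smul_left := fun a b r => inner_smul_left a (P x b) r }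
    have h := @InnerProductSpace.Core.inner_mul_inner_self_le ℂ 𝓗 _ _ _ c u v
    have hnorm : ‖(inner ℂ v (P x u) : ℂ)‖ = ‖(inner ℂ u (P x v) : ℂ)‖ := by
      rw [← inner_conj_symm v ((P x) u), RCLike.norm_conj]
      exact congrArg norm (hsym x u v)
    calc ‖(inner ℂ u (P x v) : ℂ)‖ ^ 2
        = ‖(inner ℂ u (P x v) : ℂ)‖ * ‖(inner ℂ v (P x u) : ℂ)‖ := by rw [hnorm, sq]
      _ ≤ (inner ℂ u (P x u) : ℂ).re * (inner ℂ v (P x v) : ℂ).re := h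
  -- the diagonal sums
  have ha_sum : ∀ u : 𝓗,
      HasSum (fun x => (inner ℂ u (P x u) : ℂ).re) (‖u‖ ^ 2) := by
    intro u
    have h := (hP_weak u u).mapL Complex.reCLM
    have : (inner ℂ u u : ℂ).re = ‖u‖ ^ 2 := by
      simpa using inner_self_eq_norm_sq (𝕜 := ℂ) u
    simpa [this, ← Complex.ofReal_pow] using h
  -- key estimate : partial sums of `P x v` are controlled by diagonal tails
  have key : ∀ (s : Finset E) (v : 𝓗),
      ‖∑ x ∈ s, P x v‖ ^ 2 ≤ ∑ x ∈ s, (inner ℂ v (P x v) : ℂ).re := by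
    intro s v
    set u := ∑ x ∈ s, P x v with hu
    have h1 : ‖u‖ ^ 2 = ∑ x ∈ s, (inner ℂ u (P x v) : ℂ).re := by
      have : (inner ℂ u u : ℂ) = ∑ x ∈ s, (inner ℂ u (P x v) : ℂ) := by
        rw [hu]
        rw [inner_sum]
      have h2 := inner_self_eq_norm_sq (𝕜 := ℂ) u
      simp only [RCLike.re_to_complex] at h2
      rw [← h2, this, Complex.re_sum]
    have hua : ∑ x ∈ s, (inner ℂ u (P x u) : ℂ).re ≤ ‖u‖ ^ 2 :=
      sum_le_hasSum s (fun x _ => hP_pos x u) (ha_sum u)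
    have h3 : ‖u‖ ^ 2 ≤
        Real.sqrt (∑ x ∈ s, (inner ℂ u (P x u) : ℂ).re) *
          Real.sqrt (∑ x ∈ s, (inner ℂ v (P x v) : ℂ).re) := by
      rw [h1]
      calc ∑ x ∈ s, (inner ℂ u (P x v) : ℂ).re
          ≤ ∑ x ∈ s, Real.sqrt ((inner ℂ u (P x u) : ℂ).re) *
              Real.sqrt ((inner ℂ v (P x v) : ℂ).re) := by
            refine Finset.sum_le_sum fun x _ => ?_
            have h4 : (inner ℂ u (P x v) : ℂ).re ≤ ‖(inner ℂ u (P x v) : ℂ)‖ :=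
              Complex.re_le_norm _
            refine h4.trans ?_
            have h5 : ‖(inner ℂ u (P x v) : ℂ)‖ ^ 2 ≤
                Real.sqrt ((inner ℂ u (P x u) : ℂ).re) ^ 2 *
                  Real.sqrt ((inner ℂ v (P x v) : ℂ).re) ^ 2 := by
              rw [Real.sq_sqrt (hP_pos x u), Real.sq_sqrt (hP_pos x v)]
              exact hcs x u v
            rw [← mul_pow] at h5
            exact le_of_pow_le_pow_left₀ two_ne_zero
              (mul_nonneg (Real.sqrt_nonneg _) (Real.sqrt_nonneg _)) h5
        _ ≤ Real.sqrt (∑ x ∈ s, (inner ℂ u (P x u) : ℂ).re) *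
              Real.sqrt (∑ x ∈ s, (inner ℂ v (P x v) : ℂ).re) := by
            have h6 := Finset.sum_mul_sq_le_sq_mul_sq s
              (fun x => Real.sqrt ((inner ℂ u (P x u) : ℂ).re))
              (fun x => Real.sqrt ((inner ℂ v (P x v) : ℂ).re))
            simp only [Real.sq_sqrt (hP_pos _ u), Real.sq_sqrt (hP_pos _ v)] at h6
            have h7 : ∑ x ∈ s, Real.sqrt ((inner ℂ u (P x u) : ℂ).re) *
                  Real.sqrt ((inner ℂ v (P x v) : ℂ).re) ≤
                Real.sqrt ((∑ x ∈ s, (inner ℂ u (P x u) : ℂ).re) *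
                  ∑ x ∈ s, (inner ℂ v (P x v) : ℂ).re) := by
              rw [Real.le_sqrt (Finset.sum_nonneg fun x _ =>
                mul_nonneg (Real.sqrt_nonneg _) (Real.sqrt_nonneg _))]
              · exact h6
              · exact mul_nonneg (Finset.sum_nonneg fun x _ => hP_pos x u)
                  (Finset.sum_nonneg fun x _ => hP_pos x v)
            rw [Real.sqrt_mul (Finset.sum_nonneg fun x _ => hP_pos x u)] at h7
            exact h7
    have h8 : Real.sqrt (∑ x ∈ s, (inner ℂ u (P x u) : ℂ).re) ≤ ‖u‖ := by
      have := Real.sqrt_le_sqrt hua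
      rwa [Real.sqrt_sq (norm_nonneg u)] at this
    have h9 : ‖u‖ ^ 2 ≤ ‖u‖ * Real.sqrt (∑ x ∈ s, (inner ℂ v (P x v) : ℂ).re) :=
      h3.trans (mul_le_mul_of_nonneg_right h8 (Real.sqrt_nonneg _))
    rcases eq_or_lt_of_le (norm_nonneg u) with h0 | h0
    · rw [← h0]
      simpa using Finset.sum_nonneg fun x _ => hP_pos x v
    · have h10 : ‖u‖ ≤ Real.sqrt (∑ x ∈ s, (inner ℂ v (P x v) : ℂ).re) := by
        rw [sq] at h9
        exact le_of_mul_le_mul_left h9 h0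
      calc ‖u‖ ^ 2 ≤ Real.sqrt (∑ x ∈ s, (inner ℂ v (P x v) : ℂ).re) ^ 2 :=
            pow_le_pow_left₀ (norm_nonneg u) h10 2
        _ = ∑ x ∈ s, (inner ℂ v (P x v) : ℂ).re :=
            Real.sq_sqrt (Finset.sum_nonneg fun x _ => hP_pos x v)
  -- summability via the Cauchy criterion
  have hsummable : Summable (fun x => P x Φ) := by
    rw [summable_iff_vanishing_norm]
    intro ε hε
    have ha : Summable (fun x => (inner ℂ Φ (P x Φ) : ℂ).re) := (ha_sum Φ).summable
    rw [summable_iff_vanishing_norm] at ha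
    obtain ⟨s, hs⟩ := ha (ε ^ 2) (by positivity)
    refine ⟨s, fun t ht => ?_⟩
    have h1 : ‖∑ x ∈ t, P x Φ‖ ^ 2 ≤ ∑ x ∈ t, (inner ℂ Φ (P x Φ) : ℂ).re := key t Φ
    have h2 : ∑ x ∈ t, (inner ℂ Φ (P x Φ) : ℂ).re < ε ^ 2 := by
      have := hs t ht
      calc ∑ x ∈ t, (inner ℂ Φ (P x Φ) : ℂ).re ≤ ‖∑ x ∈ t, (inner ℂ Φ (P x Φ) : ℂ).re‖ :=
            le_abs_self _
        _ < ε ^ 2 := this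
    exact lt_of_pow_lt_pow_left₀ 2 hε.le (h1.trans_lt h2)
  obtain ⟨L, hL⟩ := hsummable
  have hLΦ : L = Φ := by
    refine ext_inner_left ℂ fun Ψ => ?_
    have h1 : HasSum (fun x => (inner ℂ Ψ (P x Φ) : ℂ)) (inner ℂ Ψ L) := by
      simpa using hL.mapL (innerSL ℂ Ψ)
    exact h1.unique (hP_weak Φ Ψ)
  rwa [hLΦ] at hL
end
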